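/- arXiv:1607.07050 — 13 statements merged into one kernel-verified Lean document; each statement's English description precedes it below -/
import Mathlib

section
/- Let a ∈ ℝ and let f, g : ℂ → ℂ be analytic at 0 with g(0) = 0, deriv g 0 ≠ 0 and f(0) ≠ 0. Set h(t) := f(t)·exp((a/2)·g(t)). Then the following are equivalent: (i) for every x ∈ ℂ, the identity f(t)·exp((a − x)·g(t)) = f(−t)·exp(x·g(−t)) holds for all t in some neighborhood of 0 (this is the paper's condition V(a) ≠ ∅, i.e. existence of an Appell sequence for (f,g) satisfying Pₙ(a−x) = (−1)ⁿPₙ(x)); (ii) g is odd near 0 and h is even near 0. -/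
open Filter Topology

/-- **First main result (Theorem 2.1).** For `f, g` analytic at `0` with `g 0 = 0`,
`deriv g 0 ≠ 0`, `f 0 ≠ 0`, and `h t = f t * exp ((a/2) * g t)`, the condition `V(a) ≠ ∅`
(i.e. the functional equation `f t * exp ((a - x) g t) = f (-t) * exp (x * g (-t))` near `0`,
for every `x`) holds iff `g` is odd near `0` and `h` is even near `0`. -/
theorem appell_symmetry_iff_odd_even (a : ℝ) (f g : ℂ → ℂ)
    (hf : AnalyticAt ℂ f 0) (hg : AnalyticAt ℂ g 0)
    (hg0 : g 0 = 0) (hg' : deriv g 0 ≠ 0) (hf0 : f 0 ≠ 0) :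
    (∀ x : ℂ, ∀ᶠ t in 𝓝 (0 : ℂ),
        f t * Complex.exp (((a : ℂ) - x) * g t) = f (-t) * Complex.exp (x * g (-t))) ↔
      ((∀ᶠ t in 𝓝 (0 : ℂ), g (-t) = - g t) ∧
        (∀ᶠ t in 𝓝 (0 : ℂ),
          f (-t) * Complex.exp (((a : ℂ) / 2) * g (-t)) =
            f t * Complex.exp (((a : ℂ) / 2) * g t))) := by
  constructor
  · intro H
    have hfc : ContinuousAt f 0 := hf.continuousAt
    have hgc : ContinuousAt g 0 := hg.continuousAt
    have hfne : ∀ᶠ t in 𝓝 (0 : ℂ), f t ≠ 0 := hfc.eventually_ne hf0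
    have hgt : Tendsto g (𝓝 0) (𝓝 0) := by
      have := hgc.tendsto; rwa [hg0] at this
    have hgs : ∀ᶠ t in 𝓝 (0 : ℂ), ‖g t‖ < Real.pi := by
      have : ∀ᶠ z in 𝓝 (0 : ℂ), ‖z‖ < Real.pi := by
        have := Metric.ball_mem_nhds (0 : ℂ) Real.pi_pos
        filter_upwards [this] with z hz
        simpa [Complex.dist_eq] using hz
      exact hgt.eventually this
    have hneg : Tendsto (fun t : ℂ => -t) (𝓝 0) (𝓝 0) := by
      simpa using (continuous_neg.tendsto (0 : ℂ))
    have hgsneg : ∀ᶠ t in 𝓝 (0 : ℂ), ‖g (-t)‖ < Real.pi := hneg.eventually hgs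
    constructor
    · -- g odd near 0
      filter_upwards [H 0, H 1, hfne, hgs, hgsneg] with t e0 e1 hft h1 h2
      simp only [sub_zero, zero_mul, Complex.exp_zero, mul_one, one_mul] at e0 e1
      -- e0 : f t * exp (a * g t) = f (-t)
      -- e1 : f t * exp ((a - 1) * g t) = f (-t) * exp (g (-t))
      rw [← e0] at e1
      have hexp : Complex.exp ((a - 1) * g t) =
          Complex.exp ((a : ℂ) * g t + g (-t)) := by
        rw [mul_assoc] at e1
        rw [mul_left_cancel₀ hft e1, ← Complex.exp_add]
      rw [Complex.exp_eq_exp_iff_exists_int] at hexp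
      obtain ⟨n, hn⟩ := hexp
      have hsum : g (-t) + g t = -(n * (2 * Real.pi * Complex.I)) := by
        linear_combination -hn
      have hn0 : n = 0 := by
        by_contra hne
        have h1' : (1 : ℝ) ≤ |(n : ℝ)| := by
          have : (1 : ℤ) ≤ |n| := Int.one_le_abs hne
          exact_mod_cast this
        have hnorm : ‖g (-t) + g t‖ = |(n : ℝ)| * (2 * Real.pi) := by
          rw [hsum, norm_neg]
          simp [norm_mul, Complex.norm_I, Complex.norm_real,
            abs_of_pos Real.pi_pos]
        have hlt : ‖g (-t) + g t‖ < 2 * Real.pi := by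
          calc ‖g (-t) + g t‖ ≤ ‖g (-t)‖ + ‖g t‖ := norm_add_le _ _
            _ < Real.pi + Real.pi := by linarith
            _ = 2 * Real.pi := by ring
        have : (2 * Real.pi) ≤ |(n : ℝ)| * (2 * Real.pi) := by
          nlinarith [Real.pi_pos]
        linarith [hnorm ▸ hlt]
      rw [hn0] at hsum
      simp at hsum
      linear_combination hsum
    · -- h even near 0
      filter_upwards [H (a / 2)] with t e
      have : ((a : ℂ) - a / 2) = (a : ℂ) / 2 := by ring
      rw [this] at e
      exact e.symm
  · rintro ⟨hodd, heven⟩ x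
    filter_upwards [hodd, heven] with t ho he
    rw [ho] at he ⊢
    -- he : f (-t) * exp ((a/2) * -g t) = f t * exp ((a/2) * g t)
    have hfneg : f (-t) = f t * Complex.exp ((a : ℂ) * g t) := by
      have h2 : f (-t) = f t * Complex.exp ((a : ℂ) / 2 * g t) *
          Complex.exp (-((a : ℂ) / 2 * -g t)) := by
        rw [← he, mul_assoc, ← Complex.exp_add]
        simp
      rw [h2, mul_assoc, ← Complex.exp_add]
      ring_nf
    rw [hfneg, mul_assoc, ← Complex.exp_add]
    ring_nf
end

section
/- Let f, g : ℂ → ℂ be analytic at 0 with g(0) = 0, deriv g 0 ≠ 0 and f(0) ≠ 0. Then the following are equivalent: (i) for every x ∈ ℂ, the identity f(t)·exp(−x·g(t)) = f(−t)·exp(x·g(−t)) holds for all t in some neighborhood of 0 (the condition V(0) ≠ ∅, i.e. symmetry Pₙ(−x) = (−1)ⁿPₙ(x) of the associated Appell sequence); (ii) g is odd near 0 and f is even near 0. -/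
open Filter Topology

/-- **Corollary (case `a = 0`).** For `f, g` analytic at `0` with `g 0 = 0`, `deriv g 0 ≠ 0`,
`f 0 ≠ 0`, the condition `V(0) ≠ ∅` (i.e. `f t * exp (-x * g t) = f (-t) * exp (x * g (-t))`
near `0`, for every `x`) holds iff `g` is odd near `0` and `f` is even near `0`. -/
theorem appell_symmetry_zero_iff_odd_even (f g : ℂ → ℂ)
    (hf : AnalyticAt ℂ f 0) (hg : AnalyticAt ℂ g 0)
    (hg0 : g 0 = 0) (hg' : deriv g 0 ≠ 0) (hf0 : f 0 ≠ 0) :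
    (∀ x : ℂ, ∀ᶠ t in 𝓝 (0 : ℂ),
        f t * Complex.exp (-x * g t) = f (-t) * Complex.exp (x * g (-t))) ↔
      ((∀ᶠ t in 𝓝 (0 : ℂ), g (-t) = - g t) ∧ (∀ᶠ t in 𝓝 (0 : ℂ), f (-t) = f t)) := by
  constructor
  · intro h
    have heven : ∀ᶠ t in 𝓝 (0 : ℂ), f (-t) = f t := by
      filter_upwards [h 0] with t ht
      simpa using ht.symm
    have hfne : ∀ᶠ t in 𝓝 (0 : ℂ), f t ≠ 0 := hf.continuousAt.eventually_ne hf0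
    have hcont : ContinuousAt (fun t : ℂ => g (-t) + g t) 0 := by
      have h1 : ContinuousAt g (-(0:ℂ)) := by simpa using hg.continuousAt
      exact (h1.comp continuous_neg.continuousAt).add hg.continuousAt
    have hsmall : ∀ᶠ t in 𝓝 (0 : ℂ), ‖g (-t) + g t‖ < 2 * Real.pi := by
      have h0 : Filter.Tendsto (fun t : ℂ => g (-t) + g t) (𝓝 0) (𝓝 0) := by
        have := hcont.tendsto
        simpa [hg0] using this
      have hpos : (0 : ℝ) < 2 * Real.pi := by positivity
      exact (NormedAddCommGroup.tendsto_nhds_zero.mp h0) _ hpos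
    constructor
    · filter_upwards [h 1, heven, hfne, hsmall] with t h1 he hne hs
      rw [he] at h1
      have hexp : Complex.exp (-g t) = Complex.exp (g (-t)) := by
        have := mul_left_cancel₀ hne (by simpa using h1)
        simpa using this
      have h2 : Complex.exp (g (-t) + g t) = 1 := by
        rw [Complex.exp_add, ← hexp, ← Complex.exp_add]
        simp
      obtain ⟨n, hn⟩ := Complex.exp_eq_one_iff.mp h2
      have hnorm : ‖(n : ℂ) * (2 * Real.pi * Complex.I)‖ = |(n : ℝ)| * (2 * Real.pi) := by
        simp [abs_of_nonneg Real.pi_pos.le, mul_assoc]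
      rw [hn, hnorm] at hs
      have : |(n : ℝ)| < 1 := by
        have hpos : (0 : ℝ) < 2 * Real.pi := by positivity
        nlinarith [abs_nonneg ((n : ℝ))]
      have hn0 : n = 0 := by
        have h' : |n| < 1 := by exact_mod_cast (by push_cast at this ⊢; exact this : |(n:ℝ)| < 1)
        exact Int.abs_lt_one_iff.mp h'
      rw [hn0] at hn
      simp at hn
      linear_combination hn
    · exact heven
  · rintro ⟨hodd, heven⟩ x
    filter_upwards [hodd, heven] with t ho he
    rw [ho, he]
    ring_nf
end

section
/- Let a ∈ ℝ with a ≠ 0, and let f, g : ℂ → ℂ be analytic at 0 with g(0) = 0, deriv g 0 ≠ 0 and f(0) ≠ 0. Then the following are equivalent: (i) for every x ∈ ℂ, the identity f(t)·exp((a − x)·g(t)) = f(−t)·exp(x·g(−t)) holds for all t in some neighborhood of 0 (the condition V(a) ≠ ∅); (ii) g is odd near 0 and the function t ↦ (exp(a·g(t)) − 1)·f(t) is odd near 0. -/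
open Filter Topology

private lemma small_exp_eq_zero {z : ℂ} (h : Complex.exp z = 1) (hz : ‖z‖ < 2 * Real.pi) :
    z = 0 := by
  obtain ⟨n, rfl⟩ := Complex.exp_eq_one_iff.mp h
  have hn : ‖(n : ℂ) * (2 * Real.pi * Complex.I)‖ = |(n:ℝ)| * (2 * Real.pi) := by
    simp [norm_mul, _root_.abs_of_nonneg Real.pi_pos.le, abs_mul]
  rcases eq_or_ne n 0 with rfl | hne
  · simp
  · exfalso
    have h1 : (1:ℝ) ≤ |(n:ℝ)| := by
      rw [← Int.cast_abs]; exact_mod_cast Int.one_le_abs hne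
    rw [hn] at hz
    nlinarith [Real.pi_pos]

/-- **Theorem 2.3.** Let `a ≠ 0` be real and `f, g` analytic at `0` with `g 0 = 0`,
`deriv g 0 ≠ 0`, `f 0 ≠ 0`. The condition `V(a) ≠ ∅` (the functional equation
`f t * exp ((a - x) g t) = f (-t) * exp (x * g (-t))` near `0`, for every `x`) holds iff
`g` is odd near `0` and `t ↦ (exp (a * g t) - 1) * f t` is odd near `0`. -/
theorem appell_symmetry_iff_odd_odd (a : ℝ) (ha : a ≠ 0) (f g : ℂ → ℂ)
    (hf : AnalyticAt ℂ f 0) (hg : AnalyticAt ℂ g 0)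
    (hg0 : g 0 = 0) (hg' : deriv g 0 ≠ 0) (hf0 : f 0 ≠ 0) :
    (∀ x : ℂ, ∀ᶠ t in 𝓝 (0 : ℂ),
        f t * Complex.exp (((a : ℂ) - x) * g t) = f (-t) * Complex.exp (x * g (-t))) ↔
      ((∀ᶠ t in 𝓝 (0 : ℂ), g (-t) = - g t) ∧
        (∀ᶠ t in 𝓝 (0 : ℂ),
          (Complex.exp ((a : ℂ) * g (-t)) - 1) * f (-t) =
            -((Complex.exp ((a : ℂ) * g t) - 1) * f t))) := by
  have hgc : ContinuousAt g 0 := hg.continuousAt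
  have hfc : ContinuousAt f 0 := hf.continuousAt
  have hneg : Tendsto (fun t : ℂ => -t) (𝓝 0) (𝓝 0) := by
    simpa using (continuous_neg.tendsto (0:ℂ))
  have h2pi : (0:ℝ) < 2 * Real.pi := by linarith [Real.pi_pos]
  have htend : Tendsto (fun t : ℂ => (a:ℂ) * g t) (𝓝 0) (𝓝 0) := by
    have : ContinuousAt (fun t : ℂ => (a:ℂ) * g t) 0 := continuousAt_const.mul hgc
    simpa [ContinuousAt, hg0] using this
  have hsmall : ∀ᶠ t in 𝓝 (0:ℂ), ‖(a:ℂ) * g t‖ < 2 * Real.pi := by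
    have := htend (Metric.ball_mem_nhds (0:ℂ) h2pi)
    filter_upwards [this] with t ht
    simpa [Metric.mem_ball, dist_zero_right] using ht
  constructor
  · intro h
    have hx0 : ∀ᶠ t in 𝓝 (0:ℂ), f t * Complex.exp ((a:ℂ) * g t) = f (-t) := by
      filter_upwards [h 0] with t ht
      simpa using ht
    have hfne : ∀ᶠ t in 𝓝 (0:ℂ), f (-t) ≠ 0 := hneg.eventually (hfc.eventually_ne hf0)
    have hsum : Tendsto (fun t : ℂ => g (-t) + g t) (𝓝 0) (𝓝 0) := by
      have := (hgc.tendsto.comp hneg).add hgc.tendsto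
      simpa [hg0] using this
    have hsumsmall : ∀ᶠ t in 𝓝 (0:ℂ), ‖g (-t) + g t‖ < 2 * Real.pi := by
      have := hsum (Metric.ball_mem_nhds (0:ℂ) h2pi)
      filter_upwards [this] with t ht
      simpa [Metric.mem_ball, dist_zero_right] using ht
    have hodd : ∀ᶠ t in 𝓝 (0:ℂ), g (-t) = - g t := by
      filter_upwards [hx0, h 1, hfne, hsumsmall] with t h0 h1 hne hsm
      have h1' : f t * Complex.exp (((a:ℂ) - 1) * g t) = f (-t) * Complex.exp (g (-t)) := by
        simpa using h1
      have e1 : f (-t) * Complex.exp (g (-t) + g t) = f (-t) := by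
        rw [Complex.exp_add, ← mul_assoc, ← h1', mul_assoc, ← Complex.exp_add,
          show ((a:ℂ)-1) * g t + g t = (a:ℂ) * g t by ring]
        exact h0
      have hE : Complex.exp (g (-t) + g t) = 1 :=
        mul_left_cancel₀ hne (by rw [e1, mul_one])
      have := small_exp_eq_zero hE hsm
      exact eq_neg_of_add_eq_zero_left this
    refine ⟨hodd, ?_⟩
    filter_upwards [hx0, hodd, hfne] with t h0 hot hne
    rw [hot, show (a:ℂ) * -g t = -((a:ℂ) * g t) by ring]
    have hA : f (-t) * Complex.exp (-((a:ℂ) * g t)) = f t := by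
      calc f (-t) * Complex.exp (-((a:ℂ) * g t))
          = f t * Complex.exp ((a:ℂ) * g t) * Complex.exp (-((a:ℂ) * g t)) := by rw [h0]
        _ = f t := by
            rw [mul_assoc, ← Complex.exp_add, add_neg_cancel, Complex.exp_zero, mul_one]
    linear_combination hA + h0
  · rintro ⟨hodd, hho⟩
    have hφ : AnalyticAt ℂ (fun t => 1 - Complex.exp ((a:ℂ) * g t)) 0 :=
      analyticAt_const.sub (analyticAt_cexp.comp (analyticAt_const.mul hg))
    have hprod : ∀ᶠ t in 𝓝 (0:ℂ),
        (1 - Complex.exp ((a:ℂ) * g t)) *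
          (f (-t) - Complex.exp ((a:ℂ) * g t) * f t) = 0 := by
      filter_upwards [hodd, hho] with t h1 h2
      rw [h1, show (a:ℂ) * -g t = -((a:ℂ) * g t) by ring] at h2
      have huv : Complex.exp ((a:ℂ) * g t) * Complex.exp (-((a:ℂ) * g t)) = 1 := by
        rw [← Complex.exp_add, add_neg_cancel, Complex.exp_zero]
      linear_combination Complex.exp ((a:ℂ) * g t) * h2 - f (-t) * huv
    rcases hφ.eventually_eq_zero_or_eventually_ne_zero with hz | hnz
    · exfalso
      have hg0' : ∀ᶠ t in 𝓝 (0:ℂ), g t = 0 := by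
        filter_upwards [hz, hsmall] with t ht hsm
        have hE : Complex.exp ((a:ℂ) * g t) = 1 := (sub_eq_zero.mp ht).symm
        have := small_exp_eq_zero hE hsm
        rcases mul_eq_zero.mp this with h | h
        · exact absurd h (Complex.ofReal_ne_zero.mpr ha)
        · exact h
      have : deriv g 0 = deriv (fun _ : ℂ => (0:ℂ)) 0 :=
        Filter.EventuallyEq.deriv_eq hg0'
      simp at this
      exact hg' this
    · have hF : ∀ᶠ t in 𝓝 (0:ℂ), f (-t) = Complex.exp ((a:ℂ) * g t) * f t := by
        rw [eventually_nhdsWithin_iff] at hnz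
        filter_upwards [hnz, hprod] with t h1 h2
        rcases eq_or_ne t 0 with rfl | ht
        · simp [hg0]
        · have hne := h1 (Set.mem_compl_singleton_iff.mpr ht)
          have h3 : f (-t) - Complex.exp ((a:ℂ) * g t) * f t = 0 := by
            rcases mul_eq_zero.mp h2 with h | h
            · exact absurd h hne
            · exact h
          exact sub_eq_zero.mp h3
      intro x
      filter_upwards [hF, hodd] with t hFt hot
      rw [hot, hFt, show x * -g t = -(x * g t) by ring,
        show ((a:ℂ) - x) * g t = (a:ℂ) * g t + -(x * g t) by ring, Complex.exp_add]
      ring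
end

section
/- Let n ≥ 1 be an integer and a ∈ ℝ with a ≠ 0. The set Vₙ(a) := {P ∈ ℂ[X] : deg P ≤ n and P.comp(a − X) = (−1)ⁿ·P} is a ℂ-linear subspace of ℂ[X], and it equals the ℂ-span of the set {B_{n−2k}(X/a) : k ∈ ℕ, 2k ≤ n}, where B_m(X/a) denotes the composed polynomial (Polynomial.bernoulli m).comp((1/a)·X) over ℂ. Moreover this subspace has dimension ⌊n/2⌋ + 1 over ℂ. -/
open Polynomial

/-- The `n`-th Bernoulli polynomial, viewed in `ℂ[X]`. -/
noncomputable def Bc (n : ℕ) : Polynomial ℂ :=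
  (Polynomial.bernoulli n).map (algebraMap ℚ ℂ)

noncomputable def bb (u : ℂ) (m : ℕ) : Polynomial ℂ := (Bc m).comp (C u * X)



lemma bern_step (m : ℕ) (x : ℚ) :
    (Polynomial.bernoulli m).eval (1 + x) = (Polynomial.bernoulli m).eval x + m * x ^ (m - 1) :=
  Polynomial.bernoulli_eval_one_add m x

lemma bern_symm (m : ℕ) :
    (Polynomial.bernoulli m).comp (1 - X) = C ((-1 : ℚ) ^ m) * Polynomial.bernoulli m := by
  set p : ℚ[X] := (Polynomial.bernoulli m).comp (1 - X) - C ((-1:ℚ)^m) * Polynomial.bernoulli m with hp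
  suffices h : p = 0 by exact sub_eq_zero.mp h
  have heval : ∀ x : ℚ, p.eval x =
      (Polynomial.bernoulli m).eval (1 - x) - (-1:ℚ)^m * (Polynomial.bernoulli m).eval x := by
    intro x; simp [hp, eval_comp]
  have hstep : ∀ x : ℚ, p.eval (x + 1) = p.eval x := by
    intro x
    rw [heval, heval]
    have h1 : (Polynomial.bernoulli m).eval (1 + x) =
        (Polynomial.bernoulli m).eval x + m * x ^ (m - 1) :=
      Polynomial.bernoulli_eval_one_add m x
    have h2 : (Polynomial.bernoulli m).eval (1 + -x) =
        (Polynomial.bernoulli m).eval (-x) + m * (-x) ^ (m - 1) :=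
      Polynomial.bernoulli_eval_one_add m (-x)
    have e1 : (1 : ℚ) - (x+1) = -x := by ring
    have e2 : (1 : ℚ) - x = 1 + -x := by ring
    have e3 : (x:ℚ) + 1 = 1 + x := by ring
    rw [e1, e2, e3, h1, h2]
    rcases m with _ | k
    · simp
    · have hneg : (-x : ℚ) ^ (k+1-1) = (-1)^k * x ^ k := by
        rw [show k+1-1 = k from rfl, neg_pow]
      have hcan : k + 1 - 1 = k := rfl
      rw [hneg, hcan]
      have hs : ((-1:ℚ))^(k+1) = -(-1:ℚ)^k := by ring
      rw [hs]
      ring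
  have hnat : ∀ k : ℕ, p.eval (k : ℚ) = 0 := by
    intro k
    induction k with
    | zero =>
      rw [Nat.cast_zero, heval]
      simp only [sub_zero, Polynomial.bernoulli_eval_one, Polynomial.bernoulli_eval_zero]
      rw [bernoulli'_eq_bernoulli]
      ring
    | succ k ih =>
      rw [Nat.cast_succ, hstep, ih]
  have : p = 0 := by
    apply Polynomial.eq_zero_of_infinite_isRoot
    apply Set.Infinite.mono (s := Set.range ((↑) : ℕ → ℚ))
    · rintro x ⟨k, rfl⟩; exact hnat k
    · exact Set.infinite_range_of_injective Nat.cast_injective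
  exact this

lemma bern_coeff_top (m : ℕ) : (Polynomial.bernoulli m).coeff m = 1 := by
  rw [Polynomial.bernoulli, finset_sum_coeff]
  rw [Finset.sum_eq_single 0]
  · simp
  · intro i hi hne
    simp only [Finset.mem_range] at hi
    rw [coeff_monomial, if_neg (by omega)]
  · intro h; simp at h
lemma bern_degree_le (m : ℕ) : (Polynomial.bernoulli m).degree ≤ m := by
  rw [Polynomial.bernoulli]
  apply (degree_sum_le _ _).trans
  apply Finset.sup_le
  intro i hi
  apply (degree_monomial_le _ _).trans
  simp only [Finset.mem_range] at hi
  exact_mod_cast Nat.cast_le.mpr (show m - i ≤ m by omega)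
lemma bern_monic (m : ℕ) : (Polynomial.bernoulli m).Monic := by
  have h1 : (Polynomial.bernoulli m).degree = m := by
    apply le_antisymm (bern_degree_le m)
    apply le_degree_of_ne_zero
    rw [bern_coeff_top]; norm_num
  have h2 : (Polynomial.bernoulli m).natDegree = m := natDegree_eq_of_degree_eq_some h1
  rw [Monic, leadingCoeff, h2, bern_coeff_top]
lemma bern_natDegree (m : ℕ) : (Polynomial.bernoulli m).natDegree = m :=
  natDegree_eq_of_degree_eq_some (by
    apply le_antisymm (bern_degree_le m)
    apply le_degree_of_ne_zero
    rw [bern_coeff_top]; norm_num)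




lemma Bc_monic (m : ℕ) : (Bc m).Monic := (bern_monic m).map _

lemma Bc_natDegree (m : ℕ) : (Bc m).natDegree = m := by
  rw [Bc, (bern_monic m).natDegree_map, bern_natDegree]

lemma Bc_symm (m : ℕ) : (Bc m).comp (1 - X) = C ((-1 : ℂ) ^ m) * Bc m := by
  have := congrArg (Polynomial.map (algebraMap ℚ ℂ)) (bern_symm m)
  rw [Polynomial.map_comp, Polynomial.map_mul, Polynomial.map_C] at this
  simpa [Bc] using this

lemma bb_natDegree {u : ℂ} (hu : u ≠ 0) (m : ℕ) : (bb u m).natDegree = m := by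
  rw [bb, natDegree_comp, natDegree_C_mul_X _ hu, Bc_natDegree, mul_one]

lemma bb_leadingCoeff {u : ℂ} (hu : u ≠ 0) (m : ℕ) : (bb u m).leadingCoeff = u ^ m := by
  rw [bb, leadingCoeff_comp (by rw [natDegree_C_mul_X _ hu]; norm_num),
    leadingCoeff_C_mul_X, (Bc_monic m).leadingCoeff, one_mul, Bc_natDegree]

lemma bb_ne_zero {u : ℂ} (hu : u ≠ 0) (m : ℕ) : bb u m ≠ 0 := by
  intro h
  have := bb_leadingCoeff hu m
  rw [h, leadingCoeff_zero] at this
  exact pow_ne_zero m hu this.symm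

lemma bb_symm {u a' : ℂ} (hua : u * a' = 1) (m : ℕ) :
    (bb u m).comp (C a' - X) = C ((-1 : ℂ) ^ m) * bb u m := by
  rw [bb, comp_assoc]
  have h1 : (C u * X).comp (C a' - X) = ((1 - X : Polynomial ℂ)).comp (C u * X) := by
    simp only [mul_comp, C_comp, X_comp, sub_comp, one_comp]
    rw [mul_sub, ← C_mul, hua]
    simp
  rw [h1, ← comp_assoc, Bc_symm, mul_comp, C_comp]


lemma neg_pow_sub_eq {k n : ℕ} (h : 2 * k ≤ n) : ((-1 : ℂ)) ^ (n - 2 * k) = (-1) ^ n := by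
  conv_rhs => rw [show n = (n - 2 * k) + 2 * k by omega]
  rw [pow_add, pow_mul]
  norm_num

lemma bb_symm' {u a' : ℂ} (hua : u * a' = 1) {n k : ℕ} (h : 2 * k ≤ n) :
    (bb u (n - 2 * k)).comp (C a' - X) = ((-1 : ℂ) ^ n) • bb u (n - 2 * k) := by
  rw [bb_symm hua, neg_pow_sub_eq h, smul_eq_C_mul]

lemma span_mem_dir {u a' : ℂ} (hua : u * a' = 1) (hu : u ≠ 0) (n : ℕ) (P : Polynomial ℂ)
    (hP : P ∈ Submodule.span ℂ
      {Q : Polynomial ℂ | ∃ k : ℕ, 2 * k ≤ n ∧ Q = bb u (n - 2 * k)}) :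
    P.degree ≤ (n : ℕ) ∧ P.comp (C a' - X) = (-1 : ℂ) ^ n • P := by
  induction hP using Submodule.span_induction with
  | mem Q hQ =>
    obtain ⟨k, hk, rfl⟩ := hQ
    constructor
    · rw [degree_eq_natDegree (bb_ne_zero hu _), bb_natDegree hu]
      exact_mod_cast Nat.cast_le.mpr (Nat.sub_le n (2 * k))
    · exact bb_symm' hua hk
  | zero => exact ⟨by simp, by simp⟩
  | add x y _ _ hx hy =>
    exact ⟨(degree_add_le _ _).trans (max_le hx.1 hy.1),
      by rw [add_comp, hx.2, hy.2, smul_add]⟩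
  | smul c x _ hx =>
    exact ⟨(degree_smul_le _ _).trans hx.1,
      by rw [smul_comp, hx.2, smul_comm]⟩

lemma mem_span_dir {u a' : ℂ} (hua : u * a' = 1) (hu : u ≠ 0) (n : ℕ) :
    ∀ d (P : Polynomial ℂ), P.natDegree ≤ d → P.degree ≤ (n : ℕ) →
      P.comp (C a' - X) = (-1 : ℂ) ^ n • P →
      P ∈ Submodule.span ℂ
        {Q : Polynomial ℂ | ∃ k : ℕ, 2 * k ≤ n ∧ Q = bb u (n - 2 * k)} := by
  intro d
  induction d using Nat.strong_induction_on with
  | _ d IH =>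
  intro P hPd hPn hsymm
  by_cases hP0 : P = 0
  · simp [hP0]
  -- notation
  set m := P.natDegree with hm
  have hmn : m ≤ n := natDegree_le_iff_degree_le.mpr hPn
  -- degree facts about C a' - X
  have hr : (C a' - X : Polynomial ℂ) = -(X - C a') := by ring
  have hrnd : (C a' - X : Polynomial ℂ).natDegree = 1 := by
    rw [hr, natDegree_neg, natDegree_X_sub_C]
  have hrlc : (C a' - X : Polynomial ℂ).leadingCoeff = -1 := by
    rw [hr, leadingCoeff_neg, leadingCoeff_X_sub_C]
  -- parity
  have hlc := congrArg leadingCoeff hsymm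
  rw [leadingCoeff_comp (by rw [hrnd]; norm_num), hrlc, smul_eq_C_mul, leadingCoeff_mul,
    leadingCoeff_C] at hlc
  have hpar : ((-1 : ℂ)) ^ m = (-1) ^ n := by
    have hlcP : P.leadingCoeff ≠ 0 := leadingCoeff_ne_zero.mpr hP0
    have h2 : P.leadingCoeff * ((-1 : ℂ) ^ m) = P.leadingCoeff * (-1) ^ n := by
      linear_combination hlc
    exact mul_left_cancel₀ hlcP h2
  have heven : Even (m + n) := by
    have h1 : ((-1 : ℂ)) ^ (m + n) = 1 := by
      rw [pow_add, hpar, ← pow_add, ← two_mul, pow_mul]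
      norm_num
    exact (neg_one_pow_eq_one_iff_even (by norm_num : (-1 : ℂ) ≠ 1)).mp h1
  obtain ⟨r, hr2⟩ := heven
  have hk : 2 * ((n - m) / 2) ≤ n ∧ n - 2 * ((n - m) / 2) = m := by omega
  set k := (n - m) / 2
  have hbbmem : bb u m ∈ Submodule.span ℂ
      {Q : Polynomial ℂ | ∃ k : ℕ, 2 * k ≤ n ∧ Q = bb u (n - 2 * k)} := by
    apply Submodule.subset_span
    exact ⟨k, hk.1, by rw [hk.2]⟩
  set c := P.leadingCoeff / u ^ m with hc
  set Q := P - c • bb u m with hQ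
  have hQcoeff : Q.coeff m = 0 := by
    rw [hQ, coeff_sub, coeff_smul, smul_eq_mul]
    have h1 : (bb u m).coeff m = u ^ m := by
      rw [show (bb u m).coeff m = (bb u m).leadingCoeff by rw [leadingCoeff, bb_natDegree hu],
        bb_leadingCoeff hu]
    rw [h1, hc, div_mul_cancel₀ _ (pow_ne_zero m hu), hm, coeff_natDegree, sub_self]
  have hQnd : Q.natDegree ≤ m := by
    apply (natDegree_sub_le _ _).trans
    apply max_le le_rfl
    exact (natDegree_smul_le _ _).trans (le_of_eq (bb_natDegree hu m))
  by_cases hQ0 : Q = 0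
  · have : P = c • bb u m := by rw [← sub_eq_zero]; exact hQ0
    rw [this]
    exact Submodule.smul_mem _ _ hbbmem
  · have hQlt : Q.natDegree < m := by
      rcases lt_or_eq_of_le hQnd with h | h
      · exact h
      · exfalso
        apply leadingCoeff_ne_zero.mpr hQ0
        rw [leadingCoeff, h, hQcoeff]
    have hQdegn : Q.degree ≤ (n : ℕ) := by
      apply (degree_sub_le _ _).trans
      apply max_le hPn
      apply (degree_smul_le _ _).trans
      rw [degree_eq_natDegree (bb_ne_zero hu m), bb_natDegree hu]
      exact_mod_cast Nat.cast_le.mpr hmn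
    have hQsymm : Q.comp (C a' - X) = (-1 : ℂ) ^ n • Q := by
      rw [hQ, sub_comp, smul_comp, hsymm, bb_symm hua, hpar, ← smul_eq_C_mul, smul_sub,
        smul_comm c]
    have hQmem := IH Q.natDegree (lt_of_lt_of_le hQlt hPd) Q le_rfl hQdegn hQsymm
    have : P = Q + c • bb u m := by rw [hQ]; ring
    rw [this]
    exact Submodule.add_mem _ hQmem (Submodule.smul_mem _ _ hbbmem)


lemma bb_li {u : ℂ} (hu : u ≠ 0) (n : ℕ) :
    LinearIndependent ℂ (fun k : Fin (n / 2 + 1) => bb u (n - 2 * (k : ℕ))) := by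
  rw [Fintype.linearIndependent_iff]
  intro c hc
  by_contra hex
  push_neg at hex
  obtain ⟨i, hi⟩ := hex
  classical
  set s : Finset (Fin (n / 2 + 1)) := Finset.univ.filter (fun j => c j ≠ 0) with hs
  have his : i ∈ s := by simp [hs, hi]
  have hsne : s.Nonempty := ⟨i, his⟩
  set i₀ := s.min' hsne with hi0
  have hi0s : i₀ ∈ s := s.min'_mem hsne
  have hci₀ : c i₀ ≠ 0 := by simpa [hs] using hi0s
  set D := n - 2 * (i₀ : ℕ) with hD
  have hcoeff := congrArg (fun p => p.coeff D) hc
  simp only [finset_sum_coeff, coeff_smul, smul_eq_mul, coeff_zero] at hcoeff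
  rw [Finset.sum_eq_single i₀] at hcoeff
  · have hlead : (bb u D).coeff D = u ^ D := by
      rw [show (bb u D).coeff D = (bb u D).leadingCoeff by rw [leadingCoeff, bb_natDegree hu],
        bb_leadingCoeff hu]
    rw [hlead] at hcoeff
    exact hci₀ (by
      have := mul_eq_zero.mp hcoeff
      rcases this with h | h
      · exact h
      · exact absurd h (pow_ne_zero _ hu))
  · intro j _ hj
    by_cases hcj : c j = 0
    · rw [hcj, zero_mul]
    · have hjs : j ∈ s := by simp [hs, hcj]
      have hle : i₀ ≤ j := s.min'_le j hjs
      have hlt : (i₀ : ℕ) < (j : ℕ) :=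
        Fin.lt_iff_val_lt_val.mp (lt_of_le_of_ne hle (Ne.symm hj))
      have hjn : 2 * (j : ℕ) ≤ n := by have := j.2; omega
      have : (bb u (n - 2 * (j : ℕ))).natDegree < D := by
        rw [bb_natDegree hu, hD]
        have := i₀.2
        omega
      rw [coeff_eq_zero_of_natDegree_lt this, mul_zero]
  · intro h; exact absurd (Finset.mem_univ i₀) h

lemma range_eq (u : ℂ) (n : ℕ) :
    {Q : Polynomial ℂ | ∃ k : ℕ, 2 * k ≤ n ∧ Q = bb u (n - 2 * k)} =
      Set.range (fun k : Fin (n / 2 + 1) => bb u (n - 2 * (k : ℕ))) := by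
  ext Q
  constructor
  · rintro ⟨k, hk, rfl⟩
    exact ⟨⟨k, by omega⟩, rfl⟩
  · rintro ⟨j, rfl⟩
    exact ⟨(j : ℕ), by have := j.2; omega, rfl⟩

lemma finrank_part {u : ℂ} (hu : u ≠ 0) (n : ℕ) :
    Module.finrank ℂ (Submodule.span ℂ
      {Q : Polynomial ℂ | ∃ k : ℕ, 2 * k ≤ n ∧ Q = bb u (n - 2 * k)}) = n / 2 + 1 := by
  rw [range_eq u n, finrank_span_eq_card (bb_li hu n), Fintype.card_fin]
/-- **Second main result (Theorem 2.4), Bernoulli form.** For `n ≥ 1` and `a ≠ 0`,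
the set `Vₙ(a) = {P : deg P ≤ n, P(a - X) = (-1)ⁿ P}` equals the `ℂ`-span of
`{B_{n-2k}(X/a) : 2k ≤ n}` (in particular it is a `ℂ`-subspace of `ℂ[X]`), and this
subspace has dimension `⌊n/2⌋ + 1`. -/
theorem Vna_eq_span_bernoulli (n : ℕ) (hn : 1 ≤ n) (a : ℝ) (ha : a ≠ 0) :
    {P : Polynomial ℂ | P.degree ≤ (n : ℕ) ∧
        P.comp (Polynomial.C (a : ℂ) - Polynomial.X) = (-1 : ℂ) ^ n • P} =
      ↑(Submodule.span ℂ
        {Q : Polynomial ℂ | ∃ k : ℕ, 2 * k ≤ n ∧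
          Q = (Bc (n - 2 * k)).comp (Polynomial.C (1 / (a : ℂ)) * Polynomial.X)}) ∧
    Module.finrank ℂ
      (Submodule.span ℂ
        {Q : Polynomial ℂ | ∃ k : ℕ, 2 * k ≤ n ∧
          Q = (Bc (n - 2 * k)).comp (Polynomial.C (1 / (a : ℂ)) * Polynomial.X)}) =
      n / 2 + 1 := by
  have ha' : (a : ℂ) ≠ 0 := Complex.ofReal_ne_zero.mpr ha
  have hu : (1 / (a : ℂ)) ≠ 0 := one_div_ne_zero ha'
  have hua : (1 / (a : ℂ)) * (a : ℂ) = 1 := by field_simp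
  have hsets : {Q : Polynomial ℂ | ∃ k : ℕ, 2 * k ≤ n ∧
      Q = (Bc (n - 2 * k)).comp (Polynomial.C (1 / (a : ℂ)) * Polynomial.X)} =
      {Q : Polynomial ℂ | ∃ k : ℕ, 2 * k ≤ n ∧ Q = bb (1 / (a : ℂ)) (n - 2 * k)} := rfl
  rw [hsets]
  constructor
  · ext P
    simp only [Set.mem_setOf_eq, SetLike.mem_coe]
    constructor
    · rintro ⟨h1, h2⟩
      exact mem_span_dir hua hu n P.natDegree P le_rfl h1 h2
    · intro hP
      exact span_mem_dir hua hu n P hP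
  · exact finrank_part hu n
end

section
/- Let n ≥ 1 be an integer and a ∈ ℝ with a ≠ 0. The set Vₙ(a) := {P ∈ ℂ[X] : deg P ≤ n and P.comp(a − X) = (−1)ⁿ·P} equals the ℂ-span of the set {E_{n−2k}(X/a) : k ∈ ℕ, 2k ≤ n}, where Eₘ is the m-th Euler polynomial and E_m(X/a) denotes Eₘ composed with (1/a)·X. -/
set_option maxHeartbeats 1000000

open Polynomial PowerSeries

/-- The `n`-th Euler polynomial in `ℂ[X]`:
`Eₙ(X) = (2/(n+1)) * (B_{n+1}(X) - 2^{n+1} * B_{n+1}(X/2))`. -/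
noncomputable def Ec (n : ℕ) : Polynomial ℂ :=
  Polynomial.C (2 / ((n : ℂ) + 1)) *
    (Bc (n + 1) -
      Polynomial.C ((2 : ℂ) ^ (n + 1)) *
        (Bc (n + 1)).comp (Polynomial.C ((2 : ℂ)⁻¹) * Polynomial.X))

theorem bernoulli_eval_half (n : ℕ) :
    (Polynomial.bernoulli n).eval (2⁻¹ : ℚ) = (2 * (2⁻¹:ℚ)^n - 1) * _root_.bernoulli n := by
  have hb : bernoulliPowerSeries ℚ * (exp ℚ - 1) = PowerSeries.X :=
    bernoulliPowerSeries_mul_exp_sub_one ℚ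
  have hg := Polynomial.bernoulli_generating_function ((2:ℚ)⁻¹)
  have hFF : rescale (2:ℚ)⁻¹ (exp ℚ) * rescale (2:ℚ)⁻¹ (exp ℚ) = exp ℚ := by
    rw [exp_mul_exp_eq_exp_add]; norm_num
  have hrX : rescale (2:ℚ)⁻¹ (PowerSeries.X : PowerSeries ℚ)
      = PowerSeries.C (R := ℚ) 2⁻¹ * PowerSeries.X := by
    ext k
    rcases eq_or_ne k 1 with h | h <;>
      simp [coeff_rescale, PowerSeries.coeff_X, h]
  have hrb : rescale (2:ℚ)⁻¹ (bernoulliPowerSeries ℚ) * (rescale (2:ℚ)⁻¹ (exp ℚ) - 1) =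
      PowerSeries.C (R := ℚ) 2⁻¹ * PowerSeries.X := by
    rw [← hrX, ← map_one (rescale (2:ℚ)⁻¹), ← map_sub, ← map_mul, hb]
  have hC2 : (PowerSeries.C (R := ℚ) 2) * (PowerSeries.C (R := ℚ) 2⁻¹) = 1 := by
    rw [← map_mul]; norm_num
  have key : (PowerSeries.C (R := ℚ) 2 * rescale (2:ℚ)⁻¹ (bernoulliPowerSeries ℚ)
        - bernoulliPowerSeries ℚ) * (exp ℚ - 1)
      = PowerSeries.X * rescale (2:ℚ)⁻¹ (exp ℚ) := by
    have h1 : (exp ℚ - 1)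
        = (rescale (2:ℚ)⁻¹ (exp ℚ) - 1) * (rescale (2:ℚ)⁻¹ (exp ℚ) + 1) := by
      linear_combination -hFF
    calc (PowerSeries.C (R := ℚ) 2 * rescale (2:ℚ)⁻¹ (bernoulliPowerSeries ℚ)
            - bernoulliPowerSeries ℚ) * (exp ℚ - 1)
        = PowerSeries.C (R := ℚ) 2
            * (rescale (2:ℚ)⁻¹ (bernoulliPowerSeries ℚ) * (rescale (2:ℚ)⁻¹ (exp ℚ) - 1))
            * (rescale (2:ℚ)⁻¹ (exp ℚ) + 1)
          - bernoulliPowerSeries ℚ * (exp ℚ - 1) := by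
          linear_combination (PowerSeries.C (R := ℚ) 2
            * rescale (2:ℚ)⁻¹ (bernoulliPowerSeries ℚ)) * h1
      _ = PowerSeries.C (R := ℚ) 2 * (PowerSeries.C (R := ℚ) 2⁻¹ * PowerSeries.X)
            * (rescale (2:ℚ)⁻¹ (exp ℚ) + 1) - PowerSeries.X := by rw [hrb, hb]
      _ = PowerSeries.X * rescale (2:ℚ)⁻¹ (exp ℚ) := by
          rw [← mul_assoc, hC2]; ring
  have hexp : (exp ℚ - 1 : PowerSeries ℚ) ≠ 0 := by
    intro h
    have := congrArg (PowerSeries.coeff (R := ℚ) 1) h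
    simp [PowerSeries.coeff_exp] at this
  have hBeq := mul_right_cancel₀ hexp (hg.trans key.symm)
  have hc := congrArg (PowerSeries.coeff (R := ℚ) n) hBeq
  simp only [PowerSeries.coeff_mk, map_sub, PowerSeries.coeff_C_mul, coeff_rescale,
    bernoulliPowerSeries, PowerSeries.coeff_mk, Algebra.algebraMap_self, Polynomial.map_id,
    RingHom.id_apply, aeval_def, eval₂_eq_eval_map, Polynomial.map_smul, Polynomial.eval_smul, smul_eq_mul] at hc
  have hfac : ((n.factorial : ℚ)) ≠ 0 := by exact_mod_cast n.factorial_ne_zero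
  field_simp at hc
  rw [show (1/2 : ℚ) = 2⁻¹ by norm_num] at hc
  have key2 : (Polynomial.bernoulli n).eval (2⁻¹:ℚ) * 2 ^ n
      = (2 - 2 ^ n) * _root_.bernoulli n := by
    have h2 : ((n.factorial : ℚ) * n.factorial) ≠ 0 := mul_ne_zero hfac hfac
    apply mul_right_cancel₀ h2
    have hh0 : (2⁻¹:ℚ)^n * 2^n = 1 := by rw [← mul_pow]; norm_num
    linear_combination ((2:ℚ)^n * ((n.factorial : ℚ) * n.factorial)) * hc
      + (2 * _root_.bernoulli n * ((n.factorial : ℚ) * n.factorial)) * hh0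
  have h2n : ((2:ℚ) ^ n) ≠ 0 := by positivity
  field_simp
  rw [show (1/2 : ℚ) = 2⁻¹ by norm_num]
  have hh : (2⁻¹:ℚ)^n * 2^n = 1 := by rw [← mul_pow]; norm_num
  linear_combination (2⁻¹:ℚ)^n * key2 - ((Polynomial.bernoulli n).eval (2⁻¹:ℚ) + _root_.bernoulli n) * hh

lemma bernoulli_coeff (n k : ℕ) :
    (Polynomial.bernoulli n).coeff k =
      if k ≤ n then _root_.bernoulli (n - k) * n.choose k else 0 := by
  rw [Polynomial.bernoulli_def, Polynomial.finset_sum_coeff]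
  simp only [Polynomial.coeff_monomial]
  rw [Finset.sum_ite_eq' (Finset.range (n+1)) k]
  simp [Nat.lt_succ_iff]

lemma Bc_coeff (n k : ℕ) :
    (Bc n).coeff k =
      if k ≤ n then ((_root_.bernoulli (n - k) * n.choose k : ℚ) : ℂ) else 0 := by
  rw [Bc, Polynomial.coeff_map, bernoulli_coeff]
  split <;> simp

lemma Bc_coeff_self (n : ℕ) : (Bc n).coeff n = 1 := by
  simp [Bc_coeff]

lemma Bc_coeff_succ (n : ℕ) : (Bc (n + 1)).coeff n = -((n : ℂ) + 1) / 2 := by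
  rw [Bc_coeff]
  simp [Nat.succ_sub_one, _root_.bernoulli_one]
  push_cast
  ring

lemma Bc_coeff_eq_zero (n k : ℕ) (h : n < k) : (Bc n).coeff k = 0 := by
  rw [Bc_coeff, if_neg (by omega)]

lemma comp_C_mul_X_coeff (p : Polynomial ℂ) (r : ℂ) (k : ℕ) :
    (p.comp (Polynomial.C r * Polynomial.X)).coeff k = r ^ k * p.coeff k := by
  induction p using Polynomial.induction_on' with
  | add p q hp hq => simp [add_comp, hp, hq, mul_add]
  | monomial e a =>
    rw [monomial_comp, mul_pow, ← C_pow, ← mul_assoc, ← C_mul, C_mul_X_pow_eq_monomial]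
    rw [Polynomial.coeff_monomial, Polynomial.coeff_monomial]
    rcases eq_or_ne e k with h | h
    · simp [h, mul_comm]
    · simp [h]

lemma Ec_coeff (m k : ℕ) :
    (Ec m).coeff k = (2 / ((m : ℂ) + 1)) *
      ((1 - (2:ℂ)^(m+1) * (2:ℂ)⁻¹^k) * (Bc (m+1)).coeff k) := by
  rw [Ec, Polynomial.coeff_C_mul, Polynomial.coeff_sub, Polynomial.coeff_C_mul, comp_C_mul_X_coeff]
  ring

lemma Ec_coeff_self (m : ℕ) : (Ec m).coeff m = 1 := by
  have hm : ((m : ℂ) + 1) ≠ 0 := by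
    exact Nat.cast_add_one_ne_zero m
  rw [Ec_coeff, Bc_coeff_succ]
  have h2 : ((2:ℂ)⁻¹)^m = ((2:ℂ)^m)⁻¹ := by rw [inv_pow]
  field_simp
  have h3 : ((1:ℂ)/2)^m * 2^m = 1 := by rw [← mul_pow]; norm_num
  linear_combination 2*h3

lemma Ec_coeff_eq_zero (m k : ℕ) (h : m < k) : (Ec m).coeff k = 0 := by
  rcases eq_or_lt_of_le (Nat.succ_le_of_lt h) with h1 | h1
  · rw [Ec_coeff, ← h1, Bc_coeff_self]
    have : (1 - (2:ℂ)^(m+1) * (2:ℂ)⁻¹^(m+1)) = 0 := by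
      rw [inv_pow]
      field_simp
      simp
    rw [this]
    ring
  · rw [Ec_coeff, Bc_coeff_eq_zero _ _ h1]
    ring

lemma Ec_degree_le (m : ℕ) : (Ec m).degree ≤ m := by
  rw [Polynomial.degree_le_iff_coeff_zero]
  intro k hk
  have : m < k := by exact_mod_cast hk
  exact Ec_coeff_eq_zero m k this

lemma Ec_natDegree (m : ℕ) : (Ec m).natDegree = m := by
  apply le_antisymm (natDegree_le_iff_degree_le.2 (Ec_degree_le m))
  apply Polynomial.le_natDegree_of_ne_zero
  rw [Ec_coeff_self]
  exact one_ne_zero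

lemma Ec_ne_zero (m : ℕ) : Ec m ≠ 0 := by
  intro h
  have := Ec_coeff_self m
  rw [h] at this
  simp at this

lemma Ec_monic (m : ℕ) : (Ec m).Monic := by
  rw [Monic, leadingCoeff, Ec_natDegree, Ec_coeff_self]

lemma Ec_zero_eq_one : Ec 0 = 1 := by
  have h0 : (Ec 0).natDegree = 0 := Ec_natDegree 0
  rw [Polynomial.eq_C_of_natDegree_eq_zero h0, Ec_coeff_self]
  simp

lemma derivative_Bc (n : ℕ) :
    Polynomial.derivative (Bc (n+1)) = Polynomial.C ((n:ℂ)+1) * Bc n := by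
  rw [Bc, Bc, Polynomial.derivative_map, Polynomial.derivative_bernoulli_add_one]
  rw [Polynomial.map_mul]
  congr 1
  simp [Polynomial.C_eq_natCast]

lemma Bc_coeff_mul (n k : ℕ) :
    ((k:ℂ)+1) * (Bc (n+2)).coeff (k+1) = ((n:ℂ)+2) * (Bc (n+1)).coeff k := by
  rcases le_or_gt k (n+1) with h | h
  · rw [Bc_coeff, Bc_coeff, if_pos (by omega), if_pos h]
    have hs : n + 2 - (k + 1) = n + 1 - k := by omega
    rw [hs]
    have hch : (n + 2) * (n+1).choose k = (n+2).choose (k+1) * (k+1) := by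
      exact_mod_cast Nat.add_one_mul_choose_eq (n+1) k
    have hchC : ((n:ℂ) + 2) * ((n+1).choose k : ℂ) = ((n+2).choose (k+1) : ℂ) * ((k:ℂ)+1) := by
      exact_mod_cast congrArg (Nat.cast : ℕ → ℂ) hch
    push_cast
    linear_combination (-((_root_.bernoulli (n+1-k) : ℚ) : ℂ)) * hchC
  · rw [Bc_coeff_eq_zero _ _ (by omega), Bc_coeff_eq_zero _ _ (by omega)]
    ring

lemma derivative_Ec (n : ℕ) :
    Polynomial.derivative (Ec (n+1)) = Polynomial.C ((n:ℂ)+1) * Ec n := by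
  ext k
  rw [Polynomial.coeff_derivative, Polynomial.coeff_C_mul, Ec_coeff, Ec_coeff]
  have hbc : ((k:ℂ)+1) * (Bc (n+1+1)).coeff (k+1) = (((n:ℂ))+2) * (Bc (n+1)).coeff k :=
    Bc_coeff_mul n k
  have hn1 : ((n:ℂ)+1) ≠ 0 := Nat.cast_add_one_ne_zero n
  have hn2 : ((n:ℂ)+2) ≠ 0 := by
    have : ((n+2:ℕ):ℂ) ≠ 0 := Nat.cast_ne_zero.mpr (by omega)
    push_cast at this
    exact this
  have hc : (2:ℂ)^(n+1+1) * (2:ℂ)⁻¹^(k+1) = (2:ℂ)^(n+1) * (2:ℂ)⁻¹^k := by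
    rw [pow_succ, pow_succ]
    field_simp
    ring
  rw [hc]
  calc 2 / (((n+1:ℕ):ℂ) + 1) * ((1 - (2:ℂ)^(n+1) * (2:ℂ)⁻¹^k) * (Bc (n+1+1)).coeff (k+1))
        * (((k:ℕ):ℂ)+1)
      = 2 / ((n:ℂ)+2) * (1 - (2:ℂ)^(n+1) * (2:ℂ)⁻¹^k)
          * ((((k:ℕ):ℂ)+1) * (Bc (n+1+1)).coeff (k+1)) := by
        push_cast; ring
    _ = 2 / ((n:ℂ)+2) * (1 - (2:ℂ)^(n+1) * (2:ℂ)⁻¹^k) * (((n:ℂ)+2) * (Bc (n+1)).coeff k) := by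
        rw [hbc]
    _ = ((n:ℂ)+1) * (2 / ((n:ℂ) + 1) * ((1 - (2:ℂ)^(n+1) * (2:ℂ)⁻¹^k) * (Bc (n+1)).coeff k)) := by
        field_simp


lemma Bc_eval (n : ℕ) (x : ℚ) :
    (Bc n).eval ((x : ℂ)) = (((Polynomial.bernoulli n).eval x : ℚ) : ℂ) := by
  rw [Bc, Polynomial.eval_map, show ((x:ℂ)) = algebraMap ℚ ℂ x from
    (eq_ratCast (algebraMap ℚ ℂ) x).symm, Polynomial.eval₂_at_apply]
  rw [eq_ratCast]

lemma Bc_eval_zero (n : ℕ) : (Bc n).eval 0 = ((_root_.bernoulli n : ℚ) : ℂ) := by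
  have := Bc_eval n 0
  simpa using this

lemma Bc_eval_one (n : ℕ) : (Bc n).eval 1 = (((-1:ℚ))^n * (_root_.bernoulli n : ℚ) : ℂ) := by
  have := Bc_eval n 1
  simp only [Rat.cast_one] at this
  rw [this, Polynomial.bernoulli_eval_one, bernoulli'_eq_bernoulli]
  push_cast
  ring

lemma Bc_eval_half (n : ℕ) :
    (Bc n).eval (2⁻¹ : ℂ) = (2 * (2⁻¹:ℂ)^n - 1) * ((_root_.bernoulli n : ℚ) : ℂ) := by
  have := Bc_eval n 2⁻¹
  simp only [Rat.cast_inv, Rat.cast_ofNat] at this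
  rw [this, bernoulli_eval_half]
  push_cast
  ring

lemma Ec_eval_one (m : ℕ) : (Ec m).eval 1 = (-1:ℂ)^m * (Ec m).eval 0 := by
  set β : ℂ := ((_root_.bernoulli (m+1) : ℚ) : ℂ) with hβ
  have e0 : (Ec m).eval 0 = 2 / ((m:ℂ)+1) * (β - (2:ℂ)^(m+1) * β) := by
    rw [Ec]
    simp only [eval_mul, eval_sub, eval_C, eval_comp, eval_X, mul_zero, Bc_eval_zero]
    rfl
  have e1 : (Ec m).eval 1 = 2 / ((m:ℂ)+1) *
      ((-1:ℂ)^(m+1) * β - (2:ℂ)^(m+1) * ((2 * (2⁻¹:ℂ)^(m+1) - 1) * β)) := by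
    rw [Ec]
    simp only [eval_mul, eval_sub, eval_C, eval_comp, eval_X, mul_one, Bc_eval_one,
      Bc_eval_half]
    push_cast
    ring
  rw [e0, e1]
  have key : (-1:ℂ)^(m+1) * β - (2:ℂ)^(m+1) * ((2 * (2⁻¹:ℂ)^(m+1) - 1) * β)
      = (-1:ℂ)^m * (β - (2:ℂ)^(m+1) * β) := by
    rcases Nat.even_or_odd m with he | ho
    · rcases eq_or_ne m 0 with h0 | h0
      · subst h0
        have : β = ((-1/2 : ℚ) : ℂ) := by rw [hβ, _root_.bernoulli_one]
        rw [this]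
        norm_num
      · have hb0 : _root_.bernoulli (m+1) = 0 := by
          rw [bernoulli_eq_bernoulli'_of_ne_one (by omega)]
          exact bernoulli'_eq_zero_of_odd (Even.add_one he) (by omega)
        have : β = 0 := by rw [hβ, hb0]; simp
        rw [this]
        ring
    · have h1 : (-1:ℂ)^m = -1 := ho.neg_one_pow
      have h2 : (-1:ℂ)^(m+1) = 1 := (Odd.add_one ho).neg_one_pow
      have h3 : (2:ℂ)^(m+1) * (2⁻¹:ℂ)^(m+1) = 1 := by
        rw [← mul_pow]; norm_num
      rw [h1, h2]
      linear_combination (-2*β) * h3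
  rw [key]
  ring

lemma eq_of_deriv_eq {p q : Polynomial ℂ}
    (h1 : Polynomial.derivative p = Polynomial.derivative q)
    (h2 : p.eval 0 = q.eval 0) : p = q := by
  have hd : Polynomial.derivative (p - q) = 0 := by
    rw [Polynomial.derivative_sub, h1, sub_self]
  have hn : (p - q).natDegree = 0 := natDegree_eq_zero_of_derivative_eq_zero hd
  have hc := Polynomial.eq_C_of_natDegree_eq_zero hn
  have he : (p - q).eval 0 = 0 := by rw [eval_sub, h2, sub_self]
  rw [hc, eval_C] at he
  rw [he, map_zero] at hc
  exact sub_eq_zero.mp hc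

lemma Ec_reflect (m : ℕ) :
    (Ec m).comp (Polynomial.C 1 - Polynomial.X) = Polynomial.C ((-1:ℂ)^m) * Ec m := by
  induction m with
  | zero => rw [Ec_zero_eq_one]; simp
  | succ m ih =>
    apply eq_of_deriv_eq
    · rw [Polynomial.derivative_comp, derivative_Ec, mul_comp, C_comp, ih]
      rw [Polynomial.derivative_mul, Polynomial.derivative_C, zero_mul, zero_add, derivative_Ec]
      have hD : Polynomial.derivative (Polynomial.C (1:ℂ) - Polynomial.X) = -1 := by
        simp
      rw [hD, pow_succ, C_mul]
      ring_nf
      rw [show Polynomial.C (-1 : ℂ) = -1 by simp]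
      ring
    · rw [eval_comp]
      simp only [eval_sub, eval_C, eval_X, sub_zero, eval_mul]
      rw [Ec_eval_one]

lemma comp_scale_coeff (m k : ℕ) (r : ℂ) :
    ((Ec m).comp (Polynomial.C r * Polynomial.X)).coeff k = r ^ k * (Ec m).coeff k :=
  comp_C_mul_X_coeff _ r k

lemma comp_scale_degree_le (m : ℕ) (r : ℂ) :
    ((Ec m).comp (Polynomial.C r * Polynomial.X)).degree ≤ m := by
  rw [Polynomial.degree_le_iff_coeff_zero]
  intro k hk
  have hmk : m < k := by exact_mod_cast hk
  rw [comp_scale_coeff, Ec_coeff_eq_zero m k hmk, mul_zero]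

lemma scale_reflect (m : ℕ) (α : ℂ) (hα : α ≠ 0) :
    ((Ec m).comp (Polynomial.C (1/α) * Polynomial.X)).comp (Polynomial.C α - Polynomial.X)
      = Polynomial.C ((-1:ℂ)^m) * (Ec m).comp (Polynomial.C (1/α) * Polynomial.X) := by
  rw [Polynomial.comp_assoc]
  have h1 : (Polynomial.C (1/α) * Polynomial.X).comp (Polynomial.C α - Polynomial.X)
      = (Polynomial.C (1:ℂ) - Polynomial.X).comp (Polynomial.C (1/α) * Polynomial.X) := by
    simp only [mul_comp, C_comp, X_comp, sub_comp]
    rw [mul_sub, ← Polynomial.C_mul]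
    field_simp
  rw [h1, ← Polynomial.comp_assoc, Ec_reflect, mul_comp, C_comp]

/-- **Second main result (Theorem 2.4), Euler form.** For `n ≥ 1` and `a ≠ 0`,
the set `Vₙ(a) = {P : deg P ≤ n, P(a - X) = (-1)ⁿ P}` equals the `ℂ`-span of
`{E_{n-2k}(X/a) : 2k ≤ n}`. -/
theorem Vna_eq_span_euler (n : ℕ) (hn : 1 ≤ n) (a : ℝ) (ha : a ≠ 0) :
    {P : Polynomial ℂ | P.degree ≤ (n : ℕ) ∧
        P.comp (Polynomial.C (a : ℂ) - Polynomial.X) = (-1 : ℂ) ^ n • P} =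
      ↑(Submodule.span ℂ
        {Q : Polynomial ℂ | ∃ k : ℕ, 2 * k ≤ n ∧
          Q = (Ec (n - 2 * k)).comp (Polynomial.C (1 / (a : ℂ)) * Polynomial.X)}) := by
  have hα : (a : ℂ) ≠ 0 := Complex.ofReal_ne_zero.mpr ha
  set α : ℂ := (a : ℂ) with hαdef
  set S : Set (Polynomial ℂ) := {Q : Polynomial ℂ | ∃ k : ℕ, 2 * k ≤ n ∧
      Q = (Ec (n - 2 * k)).comp (Polynomial.C (1 / α) * Polynomial.X)} with hSdef
  have hq1 : (Polynomial.C α - Polynomial.X).natDegree = 1 := by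
    rw [show Polynomial.C α - Polynomial.X = -(Polynomial.X - Polynomial.C α) by ring,
      natDegree_neg, natDegree_X_sub_C]
  have hqlc : (Polynomial.C α - Polynomial.X).leadingCoeff = -1 := by
    rw [show Polynomial.C α - Polynomial.X = -(Polynomial.X - Polynomial.C α) by ring,
      leadingCoeff_neg, leadingCoeff, natDegree_X_sub_C]
    simp
  -- generators satisfy the two conditions
  have hgen : ∀ Q ∈ S, Q.degree ≤ (n:ℕ) ∧
      Q.comp (Polynomial.C α - Polynomial.X) = (-1:ℂ)^n • Q := by
    rintro Q ⟨k, hk, rfl⟩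
    constructor
    · exact le_trans (comp_scale_degree_le _ _) (by exact_mod_cast Nat.sub_le n (2*k))
    · rw [scale_reflect _ _ hα]
      have hpar : ((-1:ℂ))^(n - 2*k) = (-1:ℂ)^n := by
        have : n = (n - 2*k) + 2*k := by omega
        rw [this]
        rw [pow_add, pow_mul]
        norm_num
      rw [hpar, Polynomial.smul_eq_C_mul]
  apply Set.eq_of_subset_of_subset
  · -- V ⊆ span
    intro P hP
    obtain ⟨hPdeg, hPsym⟩ := hP
    suffices H : ∀ d : ℕ, ∀ P : Polynomial ℂ, P.natDegree ≤ d → P.degree ≤ (n : ℕ) →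
        P.comp (Polynomial.C α - Polynomial.X) = (-1 : ℂ) ^ n • P →
        P ∈ Submodule.span ℂ S by
      exact H P.natDegree P le_rfl hPdeg hPsym
    intro d
    induction d using Nat.strong_induction_on with
    | _ d IH =>
      intro P hPd hdeg hsym
      rcases eq_or_ne P 0 with rfl | hP0
      · exact zero_mem _
      set m := P.natDegree with hm
      set c := P.coeff m with hc
      have hc0 : c ≠ 0 := by
        rw [hc, hm]
        exact Polynomial.coeff_ne_zero_of_eq_degree (Polynomial.degree_eq_natDegree hP0)
      have hmn : m ≤ n := by
        rw [hm]
        exact Polynomial.natDegree_le_iff_degree_le.mpr hdeg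
      -- parity
      have hpow : (-1:ℂ)^m * c = (-1:ℂ)^n * c := by
        have hnd : (P.comp (Polynomial.C α - Polynomial.X)).natDegree = m := by
          rw [natDegree_comp, hq1, mul_one]
        have hl : (P.comp (Polynomial.C α - Polynomial.X)).coeff m
            = c * (-1:ℂ)^m := by
          have := Polynomial.leadingCoeff_comp (p := P)
            (q := Polynomial.C α - Polynomial.X) (by rw [hq1]; exact one_ne_zero)
          rw [leadingCoeff, leadingCoeff, hnd, hqlc] at this
          rw [this]
        have hr : ((-1:ℂ)^n • P).coeff m = (-1:ℂ)^n * c := by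
          rw [Polynomial.coeff_smul, smul_eq_mul]
        rw [hsym, hr] at hl
        linear_combination -hl
      have hpar : (-1:ℂ)^m = (-1:ℂ)^n := by
        field_simp at hpow
        tauto
      have heven : Even (n - m) := by
        rw [Nat.even_sub hmn]
        constructor
        · intro hn'
          by_contra hm'
          rw [(Nat.not_even_iff_odd.mp hm').neg_one_pow, hn'.neg_one_pow] at hpar
          norm_num at hpar
        · intro hm'
          by_contra hn'
          rw [hm'.neg_one_pow, (Nat.not_even_iff_odd.mp hn').neg_one_pow] at hpar
          norm_num at hpar
      obtain ⟨k, hk⟩ := heven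
      have h2k : 2 * k = n - m := by omega
      have hk2 : 2 * k ≤ n := by omega
      have hnm : n - 2 * k = m := by omega
      set Q : Polynomial ℂ := (Ec m).comp (Polynomial.C (1/α) * Polynomial.X) with hQ
      have hQS : Q ∈ S := ⟨k, hk2, by rw [hnm]⟩
      have hQm : Q.coeff m = (1/α)^m := by
        rw [hQ, comp_scale_coeff, Ec_coeff_self, mul_one]
      set γ : ℂ := c * α ^ m with hγ
      set P' : Polynomial ℂ := P - γ • Q with hP'
      have hP'coeff : ∀ i : ℕ, m ≤ i → P'.coeff i = 0 := by
        intro i hi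
        rcases eq_or_lt_of_le hi with rfl | hi'
        · rw [hP', Polynomial.coeff_sub, Polynomial.coeff_smul, hQm, smul_eq_mul, hγ, ← hc]
          field_simp
          rw [one_div, inv_pow, mul_inv_cancel₀ (pow_ne_zero _ hα), sub_self, mul_zero]
        · rw [hP', Polynomial.coeff_sub, Polynomial.coeff_smul, hQ, comp_scale_coeff,
            Ec_coeff_eq_zero m i hi', Polynomial.coeff_eq_zero_of_natDegree_lt (by omega)]
          simp
      have hP'deg : P'.degree ≤ (n:ℕ) := by
        refine le_trans (Polynomial.degree_sub_le _ _) (max_le hdeg ?_)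
        refine le_trans (Polynomial.degree_smul_le _ _) ?_
        exact le_trans (comp_scale_degree_le _ _) (by exact_mod_cast hmn)
      have hP'sym : P'.comp (Polynomial.C α - Polynomial.X) = (-1:ℂ)^n • P' := by
        rw [hP', sub_comp, smul_comp, hsym, hQ, scale_reflect _ _ hα, ← hQ, hpar,
          ← Polynomial.smul_eq_C_mul, smul_sub, smul_comm]
      have hPQ : P = P' + γ • Q := by rw [hP']; ring
      rcases Nat.eq_zero_or_pos m with hm0 | hmpos
      · have : P' = 0 := by
          apply Polynomial.ext
          intro i
          rw [Polynomial.coeff_zero]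
          exact hP'coeff i (by omega)
        rw [hPQ, this, zero_add]
        exact Submodule.smul_mem _ _ (Submodule.subset_span hQS)
      · have hP'nd : P'.natDegree ≤ m - 1 := by
          rw [Polynomial.natDegree_le_iff_coeff_eq_zero]
          intro i hi
          exact hP'coeff i (by omega)
        have hmd : m ≤ d := le_trans (by rw [hm]) hPd
        have hP'mem : P' ∈ Submodule.span ℂ S :=
          IH (m-1) (by omega) P' hP'nd hP'deg hP'sym
        rw [hPQ]
        exact Submodule.add_mem _ hP'mem
          (Submodule.smul_mem _ _ (Submodule.subset_span hQS))
  · -- span ⊆ V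
    intro P hP
    refine Submodule.span_induction ?_ ?_ ?_ ?_ hP
    · intro Q hQ
      exact hgen Q hQ
    · constructor <;> simp
    · rintro p q _ _ ⟨hp1, hp2⟩ ⟨hq1', hq2⟩
      constructor
      · exact le_trans (Polynomial.degree_add_le _ _) (max_le hp1 hq1')
      · rw [add_comp, hp2, hq2, smul_add]
    · rintro t p _ ⟨hp1, hp2⟩
      constructor
      · exact le_trans (Polynomial.degree_smul_le _ _) hp1
      · rw [smul_comp, hp2, smul_comm]
end

section
/- Let a ∈ ℝ, a ≠ 0, let f ∈ ℂ⟦t⟧ with nonzero constant coefficient, and let (Pₙ)ₙ be the Appell sequence generated by f. Assume the symmetry Pₙ(a − x) = (−1)ⁿ·Pₙ(x) for all n ∈ ℕ and x ∈ ℂ. Let (aₖ)ₖ be a sequence of complex numbers such that the power series F := f − Σₖ aₖ·tᵏ/k! is odd (all even-degree coefficients of F vanish). Then for every n ∈ ℕ and x ∈ ℂ, Pₙ(x) = Σ_{k even, 0 ≤ k ≤ n} aₖ·C(n,k)·a^{n−k}·E_{n−k}(x/a), where C(n,k) is the binomial coefficient. -/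
open PowerSeries

noncomputable def Bser (y : ℂ) : PowerSeries ℂ :=
  PowerSeries.mk fun n => (Bc n).eval y / n.factorial

lemma Bser_gen (y : ℂ) : Bser y * (exp ℂ - 1) = PowerSeries.X * rescale y (exp ℂ) := by
  have h := Polynomial.bernoulli_generating_function (A := ℂ) y
  rw [← h]
  congr 1
  ext n
  rw [Bser, coeff_mk, coeff_mk, map_smul, Polynomial.aeval_def, Polynomial.eval₂_eq_eval_map,
    Rat.smul_def]
  push_cast
  rw [Bc]
  ring

noncomputable def EGF (y : ℂ) : PowerSeries ℂ :=
  PowerSeries.mk fun n => (Ec n).eval y / n.factorial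

lemma key1 (y : ℂ) :
    PowerSeries.X * EGF y = PowerSeries.C 2 * (Bser y - rescale 2 (Bser (y / 2))) := by
  ext n
  cases n with
  | zero =>
    simp only [coeff_zero_eq_constantCoeff_apply, map_mul, map_sub, constantCoeff_X,
      zero_mul, constantCoeff_C]
    rw [← coeff_zero_eq_constantCoeff_apply, ← coeff_zero_eq_constantCoeff_apply, coeff_rescale]
    simp [Bser, Bc, Polynomial.bernoulli_zero]
  | succ n =>
    rw [coeff_succ_X_mul]
    simp only [EGF, coeff_mk, coeff_C_mul, map_sub, coeff_rescale, Bser, coeff_mk]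
    have hfac : (((n+1).factorial : ℕ) : ℂ) = ((n : ℂ)+1) * (n.factorial : ℂ) := by
      push_cast [Nat.factorial_succ]; ring
    have hf0 : ((n.factorial : ℕ) : ℂ) ≠ 0 := Nat.cast_ne_zero.mpr n.factorial_ne_zero
    have hn1 : ((n : ℂ) + 1) ≠ 0 := Nat.cast_add_one_ne_zero n
    have hev : (Ec n).eval y =
        2 / ((n : ℂ) + 1) * ((Bc (n+1)).eval y - 2^(n+1) * (Bc (n+1)).eval (y/2)) := by
      simp only [Ec, Polynomial.eval_mul, Polynomial.eval_C, Polynomial.eval_sub,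
        Polynomial.eval_comp, Polynomial.eval_X]
      rw [inv_mul_eq_div]
    rw [hev, hfac]
    field_simp

lemma exp_sq : rescale (2:ℂ) (exp ℂ) = exp ℂ * exp ℂ := by
  have h := PowerSeries.exp_mul_exp_eq_exp_add (1:ℂ) 1
  norm_num [rescale_one] at h
  exact h.symm

lemma exp_sub_one_ne : (exp ℂ - 1) ≠ 0 := by
  intro h
  have : PowerSeries.coeff 1 (exp ℂ - 1) = 1 := by
    simp [PowerSeries.coeff_exp]
  rw [h] at this
  simp at this

lemma C2eq : (PowerSeries.C 2) = (2 : PowerSeries ℂ) := map_ofNat _ 2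

lemma EGF_gen (y : ℂ) :
    EGF y * (exp ℂ + 1) = PowerSeries.C 2 * rescale y (exp ℂ) := by
  rw [C2eq]
  have hX : (PowerSeries.X : PowerSeries ℂ) ≠ 0 := PowerSeries.X_ne_zero
  apply mul_right_cancel₀ exp_sub_one_ne
  apply mul_left_cancel₀ hX
  have h2 : rescale 2 (Bser (y/2)) * (exp ℂ * exp ℂ - 1) =
      PowerSeries.C 2 * (PowerSeries.X * rescale y (exp ℂ)) := by
    have := congrArg (rescale (2:ℂ)) (Bser_gen (y/2))
    rw [map_mul, map_mul, map_sub, map_one, exp_sq] at this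
    rw [this]
    have hXr : rescale (2:ℂ) (PowerSeries.X : PowerSeries ℂ) =
        PowerSeries.C 2 * PowerSeries.X := by
      ext n
      rw [coeff_rescale, coeff_C_mul]
      cases n with
      | zero => simp
      | succ m => cases m <;> simp [PowerSeries.coeff_X]
    rw [hXr, rescale_rescale]
    rw [div_mul_cancel₀]
    · ring
    · norm_num
  calc PowerSeries.X * (EGF y * (exp ℂ + 1) * (exp ℂ - 1))
      = PowerSeries.X * EGF y * ((exp ℂ + 1) * (exp ℂ - 1)) := by ring
    _ = PowerSeries.C 2 * (Bser y - rescale 2 (Bser (y/2))) * ((exp ℂ + 1) * (exp ℂ - 1)) := by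
        rw [key1 y]
    _ = PowerSeries.C 2 * ((Bser y * (exp ℂ - 1)) * (exp ℂ + 1)
          - rescale 2 (Bser (y/2)) * (exp ℂ * exp ℂ - 1)) := by ring
    _ = (2 : PowerSeries ℂ) * ((PowerSeries.X * rescale y (exp ℂ)) * (exp ℂ + 1)
          - (2 : PowerSeries ℂ) * (PowerSeries.X * rescale y (exp ℂ))) := by
        rw [Bser_gen, h2, C2eq]
    _ = PowerSeries.X * ((2 : PowerSeries ℂ) * rescale y (exp ℂ) * (exp ℂ - 1)) := by ring

/-- **Theorem 2.5, odd case.** Let `a ≠ 0`, let `(Pₙ)` be the Appell sequence generated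
by `f` satisfying the symmetry `Pₙ(a - x) = (-1)ⁿ Pₙ(x)`, and let `(aₖ)` be scalars so that
`F = f - Σₖ aₖ tᵏ/k!` is an odd power series (all even coefficients vanish). Then
`Pₙ(x) = Σ_{k even, k ≤ n} aₖ C(n,k) a^{n-k} E_{n-k}(x/a)`. -/
theorem appell_eq_euler_comb (a : ℝ) (ha : a ≠ 0) (f : PowerSeries ℂ)
    (hf0 : PowerSeries.constantCoeff f ≠ 0) (P : ℕ → Polynomial ℂ)
    (hA : ∀ x : ℂ,
      PowerSeries.mk (fun n => (P n).eval x / (n.factorial : ℂ)) =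
        f * PowerSeries.rescale x (PowerSeries.exp ℂ))
    (hsym : ∀ (n : ℕ) (x : ℂ), (P n).eval ((a : ℂ) - x) = (-1) ^ n * (P n).eval x)
    (c : ℕ → ℂ)
    (hFodd : ∀ m : ℕ,
      PowerSeries.coeff (2 * m)
        (f - PowerSeries.mk (fun k => c k / (k.factorial : ℂ))) = 0) :
    ∀ (n : ℕ) (x : ℂ), (P n).eval x =
      ∑ k ∈ (Finset.range (n + 1)).filter (fun k => Even k),
        c k * (n.choose k : ℂ) * (a : ℂ) ^ (n - k) * (Ec (n - k)).eval (x / (a : ℂ)) := by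
  intro n x
  have haC : ((a : ℂ)) ≠ 0 := Complex.ofReal_ne_zero.mpr ha
  -- f = series of Pₙ(0)
  have hA0 : PowerSeries.mk (fun n => (P n).eval 0 / (n.factorial : ℂ)) = f := by
    rw [hA 0, rescale_zero]
    simp [PowerSeries.constantCoeff_exp]
  -- symmetry of series
  have hsymS : f * rescale (a : ℂ) (exp ℂ) = rescale (-1) f := by
    rw [← hA (a : ℂ)]
    ext m
    rw [coeff_mk, coeff_rescale, ← hA0, coeff_mk]
    have h := hsym m 0
    rw [sub_zero] at h
    rw [h]
    ring
  set g : PowerSeries ℂ :=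
    PowerSeries.mk (fun k => if Even k then c k / (k.factorial : ℂ) else 0) with hg
  have hB : f * (rescale (a : ℂ) (exp ℂ) + 1) = 2 * g := by
    ext m
    rw [mul_add, mul_one, map_add, hsymS, coeff_rescale, ← C2eq, coeff_C_mul, hg, coeff_mk]
    rcases Nat.even_or_odd m with he | ho
    · have hf := hFodd (m / 2)
      have h2m : 2 * (m / 2) = m := Nat.two_mul_div_two_of_even he
      rw [h2m, map_sub, coeff_mk, sub_eq_zero] at hf
      rw [if_pos he, Even.neg_one_pow he, hf]
      ring
    · rw [if_neg (Nat.not_even_iff_odd.mpr ho), Odd.neg_one_pow ho]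
      ring
  have hC : rescale (a : ℂ) (EGF (x / (a : ℂ))) * (rescale (a : ℂ) (exp ℂ) + 1) =
      2 * rescale x (exp ℂ) := by
    have h := congrArg (rescale ((a : ℂ))) (EGF_gen (x / (a : ℂ)))
    rw [map_mul, map_add, map_one, C2eq, map_mul, map_ofNat, rescale_rescale,
      div_mul_cancel₀ x haC] at h
    exact h
  have h2ne : (2 : PowerSeries ℂ) ≠ 0 := by
    intro h
    have := congrArg (PowerSeries.coeff 0) h
    rw [← C2eq] at this
    simp [PowerSeries.coeff_C] at this
  have hD : f * rescale x (exp ℂ) = g * rescale (a : ℂ) (EGF (x / (a : ℂ))) := by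
    apply mul_left_cancel₀ h2ne
    calc 2 * (f * rescale x (exp ℂ)) = f * (2 * rescale x (exp ℂ)) := by ring
      _ = f * (rescale (a : ℂ) (EGF (x / (a : ℂ))) * (rescale (a : ℂ) (exp ℂ) + 1)) := by
          rw [hC]
      _ = rescale (a : ℂ) (EGF (x / (a : ℂ))) * (f * (rescale (a : ℂ) (exp ℂ) + 1)) := by ring
      _ = rescale (a : ℂ) (EGF (x / (a : ℂ))) * (2 * g) := by rw [hB]
      _ = 2 * (g * rescale (a : ℂ) (EGF (x / (a : ℂ)))) := by ring
  have hco := congrArg (PowerSeries.coeff n) ((hA x).trans hD)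
  rw [coeff_mk, PowerSeries.coeff_mul,
    Finset.Nat.sum_antidiagonal_eq_sum_range_succ_mk] at hco
  simp only [hg, coeff_mk, coeff_rescale, EGF] at hco
  have hnf : ((n.factorial : ℕ) : ℂ) ≠ 0 := Nat.cast_ne_zero.mpr n.factorial_ne_zero
  rw [div_eq_iff hnf] at hco
  rw [hco, Finset.sum_mul, Finset.sum_filter]
  apply Finset.sum_congr rfl
  intro k hk
  have hkn : k ≤ n := Nat.lt_succ_iff.mp (Finset.mem_range.mp hk)
  by_cases hek : Even k
  · rw [if_pos hek, if_pos hek]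
    have hch : ((n.choose k : ℕ) : ℂ) * k.factorial * (n - k).factorial = n.factorial := by
      exact_mod_cast congrArg Nat.cast (Nat.choose_mul_factorial_mul_factorial hkn)
    have hkf : ((k.factorial : ℕ) : ℂ) ≠ 0 := Nat.cast_ne_zero.mpr k.factorial_ne_zero
    have hnkf : (((n - k).factorial : ℕ) : ℂ) ≠ 0 :=
      Nat.cast_ne_zero.mpr (n - k).factorial_ne_zero
    rw [← hch]
    field_simp
  · rw [if_neg hek, if_neg hek]
    ring
end

section
/- Let f ∈ ℂ⟦t⟧ with nonzero constant coefficient and let (Pₙ)ₙ be the Appell sequence generated by f. Assume Pₙ(1 − x) = (−1)ⁿ·Pₙ(x) for all n ∈ ℕ and x ∈ ℂ, and assume there exists a positive integer N such that the power series F := f − Σ_{k=0}^{N} Bₖ(0)·tᵏ/k! is even (all odd-degree coefficients of F vanish), where Bₖ(0) is the k-th Bernoulli number. Then f·(e^t − 1) = t in ℂ⟦t⟧ (i.e. f is the generating series t/(e^t − 1)), and Pₙ is the n-th Bernoulli polynomial Bₙ for every n. -/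
/-- **Bernoulli polynomials by symmetry (Theorem 3.1).** If `(Pₙ)` is the Appell sequence
generated by `f`, with the symmetry `Pₙ(1 - x) = (-1)ⁿ Pₙ(x)`, and for some positive `N`
the series `F = f - Σ_{k=0}^{N} Bₖ(0) tᵏ/k!` is even (all odd coefficients vanish), then
`f = t/(eᵗ - 1)` (i.e. `f * (eᵗ - 1) = t`) and `Pₙ = Bₙ` for all `n`. -/
theorem bernoulli_by_symmetry (f : PowerSeries ℂ)
    (hf0 : PowerSeries.constantCoeff f ≠ 0) (P : ℕ → Polynomial ℂ)
    (hA : ∀ x : ℂ,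
      PowerSeries.mk (fun n => (P n).eval x / (n.factorial : ℂ)) =
        f * PowerSeries.rescale x (PowerSeries.exp ℂ))
    (hsym : ∀ (n : ℕ) (x : ℂ), (P n).eval (1 - x) = (-1) ^ n * (P n).eval x)
    (N : ℕ) (hN : 1 ≤ N)
    (hFeven : ∀ m : ℕ,
      PowerSeries.coeff (2 * m + 1)
        (f - PowerSeries.mk
          (fun k => if k ≤ N then (Bc k).eval 0 / (k.factorial : ℂ) else 0)) = 0) :
    f * (PowerSeries.exp ℂ - 1) = PowerSeries.X ∧ ∀ n : ℕ, P n = Bc n := by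
  classical
  have hBc0 : ∀ k : ℕ, (Bc k).eval 0 = algebraMap ℚ ℂ (bernoulli k) := by
    intro k
    simp [Bc, Polynomial.eval_map, Polynomial.eval₂_at_zero,
      Polynomial.coeff_zero_eq_eval_zero, Polynomial.bernoulli_eval_zero]
  -- coeff of f
  have h0 := hA 0
  rw [PowerSeries.rescale_zero] at h0
  simp only [RingHom.coe_comp, Function.comp_apply, PowerSeries.constantCoeff_exp,
    map_one, mul_one] at h0
  have hfc : ∀ n : ℕ, PowerSeries.coeff n f = (P n).eval 0 / (n.factorial : ℂ) := by
    intro n; rw [← h0, PowerSeries.coeff_mk]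
  have h1 := hA 1
  simp only [PowerSeries.rescale_one, RingHom.id_apply] at h1
  have hfe : ∀ n : ℕ, PowerSeries.coeff n (f * PowerSeries.exp ℂ) =
      (-1) ^ n * PowerSeries.coeff n f := by
    intro n
    rw [← h1, PowerSeries.coeff_mk, hfc]
    have := hsym n 0
    simp only [sub_zero] at this
    rw [this]; ring
  -- odd coefficients of f
  have hodd : ∀ m : ℕ, PowerSeries.coeff (2 * m + 1) f =
      (if 2 * m + 1 ≤ N then (Bc (2 * m + 1)).eval 0 / ((2 * m + 1).factorial : ℂ) else 0) := by
    intro m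
    have := hFeven m
    rw [map_sub, PowerSeries.coeff_mk, sub_eq_zero] at this
    exact this
  have hodd1 : PowerSeries.coeff 1 f = -(1 / 2) := by
    have h := hodd 0
    simp only [Nat.mul_zero, Nat.zero_add, hN, if_pos] at h
    rw [h, hBc0, bernoulli_one]
    norm_num
  have hoddhigh : ∀ m : ℕ, 1 ≤ m → PowerSeries.coeff (2 * m + 1) f = 0 := by
    intro m hm
    rw [hodd m]
    split_ifs with h
    · have hz : bernoulli (2 * m + 1) = 0 := by
        rw [bernoulli, bernoulli'_eq_zero_of_odd ⟨m, by ring⟩ (by omega), mul_zero]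
      rw [hBc0, hz]
      simp
    · rfl
  have hexpne : (PowerSeries.exp ℂ - 1) ≠ 0 := by
    intro h
    have := congrArg (PowerSeries.coeff 1) h
    simp [PowerSeries.coeff_exp] at this
  have key : f * (PowerSeries.exp ℂ - 1) = PowerSeries.X := by
    ext n
    rw [mul_sub, mul_one, map_sub, hfe, PowerSeries.coeff_X]
    rcases Nat.even_or_odd n with ⟨m, hm⟩ | ⟨m, hm⟩
    · have hne : n ≠ 1 := by omega
      rw [if_neg hne]
      have : (-1 : ℂ) ^ n = 1 := by
        rw [hm]; rw [← two_mul]; exact (neg_one_pow_eq_one_iff_even (by norm_num)).2 ⟨m, by ring⟩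
      rw [this]; ring
    · have hneg : (-1 : ℂ) ^ n = -1 := Odd.neg_one_pow ⟨m, hm⟩
      rw [hneg]
      rcases Nat.eq_zero_or_pos m with rfl | hm1
      · simp only [hm]
        norm_num [hodd1]
      · have hne : n ≠ 1 := by omega
        rw [if_neg hne, hm, hoddhigh m hm1]
        ring
  refine ⟨key, ?_⟩
  intro n
  have heval : ∀ x : ℂ, (P n).eval x = (Bc n).eval x := by
    intro x
    have hB := Polynomial.bernoulli_generating_function (A := ℂ) x
    have hP : (PowerSeries.mk fun n => (P n).eval x / (n.factorial : ℂ)) *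
        (PowerSeries.exp ℂ - 1) =
        (PowerSeries.mk fun n => Polynomial.aeval x ((1 / n.factorial : ℚ) • Polynomial.bernoulli n)) *
        (PowerSeries.exp ℂ - 1) := by
      rw [hA x, hB, mul_right_comm, key]
    have hPB := mul_right_cancel₀ hexpne hP
    have := congrArg (PowerSeries.coeff n) hPB
    rw [PowerSeries.coeff_mk, PowerSeries.coeff_mk] at this
    have haev : (Polynomial.aeval x ((1 / n.factorial : ℚ) • Polynomial.bernoulli n) : ℂ) =
        (Bc n).eval x / (n.factorial : ℂ) := by
      rw [map_smul]
      rw [Polynomial.aeval_def, ← Polynomial.eval_map]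
      rw [show ((Polynomial.bernoulli n).map (algebraMap ℚ ℂ)) = Bc n from rfl]
      rw [Algebra.smul_def]
      push_cast
      field_simp
    rw [haev] at this
    have hfac : ((n.factorial : ℂ)) ≠ 0 := by exact_mod_cast Nat.factorial_ne_zero n
    field_simp at this
    exact this
  exact Polynomial.funext heval
end

section
/- For every integer r ≥ 1, every n ∈ ℕ and every x ∈ ℂ, the Bernoulli polynomial of order r satisfies Bₙ⁽ʳ⁾(x) = −2·Σ_{k=0}^{⌊n/2⌋} r^{n−2k−1}·(B_{2k+1}⁽ʳ⁾/(2k+1))·C(n,2k)·B_{n−2k}(x/r), where B_{2k+1}⁽ʳ⁾ = B_{2k+1}⁽ʳ⁾(0) and C(n,2k) is the binomial coefficient. -/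
open PowerSeries Finset

private lemma sum_even_range {M : Type*} [AddCommMonoid M] (n : ℕ) (h : ℕ → M) :
    (∑ i ∈ Finset.range (n + 1), if Even i then h i else 0) =
      ∑ k ∈ Finset.range (n / 2 + 1), h (2 * k) := by
  induction n with
  | zero => simp
  | succ n ih =>
    rw [Finset.sum_range_succ, ih]
    rcases Nat.even_or_odd (n + 1) with he | ho
    · have he' := he
      rw [Nat.even_iff] at he'
      have h1 : (n + 1) / 2 + 1 = (n / 2 + 1) + 1 := by omega
      have h2 : 2 * (n / 2 + 1) = n + 1 := by omega
      rw [if_pos he, h1]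
      conv_rhs => rw [Finset.sum_range_succ]
      rw [h2]
    · rw [Nat.odd_iff] at ho
      have h1 : (n + 1) / 2 = n / 2 := by omega
      rw [if_neg (by simp [Nat.even_iff, ho]), add_zero, h1]

private lemma bc_eval_eq (m : ℕ) (t : ℂ) :
    (Bc m).eval t = Polynomial.aeval t (Polynomial.bernoulli m) := by
  rw [Bc, Polynomial.eval_map, Polynomial.aeval_def]

/-- **Higher-order Bernoulli expansion.** If `(Bₙ⁽ʳ⁾(x))` are the Bernoulli polynomials of
order `r ≥ 1`, defined by `(eᵗ - 1)ʳ Σₙ Bₙ⁽ʳ⁾(x) tⁿ/n! = tʳ e^{xt}`, then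
`Bₙ⁽ʳ⁾(x) = -2 Σ_{2k ≤ n} r^{n-2k-1} (B_{2k+1}⁽ʳ⁾/(2k+1)) C(n,2k) B_{n-2k}(x/r)`. -/
theorem bernoulli_order_r_expansion (r : ℕ) (hr : 1 ≤ r) (B : ℕ → ℂ → ℂ)
    (hB : ∀ x : ℂ,
      (PowerSeries.exp ℂ - 1) ^ r *
          PowerSeries.mk (fun n => B n x / (n.factorial : ℂ)) =
        PowerSeries.X ^ r * PowerSeries.rescale x (PowerSeries.exp ℂ)) :
    ∀ (n : ℕ) (x : ℂ), B n x =
      -2 * ∑ k ∈ Finset.range (n / 2 + 1),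
        (r : ℂ) ^ ((n : ℤ) - 2 * (k : ℤ) - 1) * (B (2 * k + 1) 0 / ((2 * (k : ℂ) + 1))) *
          (n.choose (2 * k) : ℂ) * (Bc (n - 2 * k)).eval (x / (r : ℂ)) := by
  intro n x
  classical
  have hrC : (r : ℂ) ≠ 0 := Nat.cast_ne_zero.mpr (by omega)
  set E : PowerSeries ℂ := PowerSeries.exp ℂ with hE
  set u : PowerSeries ℂ := E - 1 with hu
  set F : ℂ → PowerSeries ℂ :=
    fun y => PowerSeries.mk (fun m => B m y / (m.factorial : ℂ)) with hF
  have h1 : u ^ r * F x = PowerSeries.X ^ r * PowerSeries.rescale x E := hB x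
  have h0 : u ^ r * F 0 = PowerSeries.X ^ r := by
    have h := hB 0
    rwa [PowerSeries.rescale_zero, RingHom.coe_comp, Function.comp_apply,
      PowerSeries.constantCoeff_exp, map_one, mul_one] at h
  have hune : u ≠ 0 := by
    intro h
    have h2 : (PowerSeries.coeff 1) u = 1 := by
      norm_num [hu, hE, PowerSeries.coeff_exp, PowerSeries.coeff_one]
    rw [h] at h2
    simp at h2
  have hXne : (PowerSeries.X : PowerSeries ℂ) ≠ 0 := PowerSeries.X_ne_zero
  -- e^t · e^{-t} = 1
  have hEE' : E * PowerSeries.rescale (-1) E = 1 := PowerSeries.exp_mul_exp_neg_eq_one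
  -- rescale (-1) (F 0) = E ^ r * F 0
  have hnegF : PowerSeries.rescale (-1) (F 0) = E ^ r * F 0 := by
    have h2 := congrArg (PowerSeries.rescale (-1)) h0
    rw [map_mul, map_pow, map_pow, PowerSeries.rescale_neg_one_X, map_sub, map_one] at h2
    -- h2 : (rescale (-1) E - 1) ^ r * rescale (-1) (F 0) = (-X) ^ r
    have h3 : ((PowerSeries.rescale (-1) E - 1) * E) ^ r * PowerSeries.rescale (-1) (F 0)
        = (-PowerSeries.X) ^ r * E ^ r := by
      rw [mul_pow]
      linear_combination (E ^ r) * h2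
    have h4 : (PowerSeries.rescale (-1) E - 1) * E = -u := by
      rw [sub_mul, one_mul, mul_comm, hEE', hu]; ring
    rw [h4] at h3
    have hm1 : ((-1 : PowerSeries ℂ) ^ r) ≠ 0 := pow_ne_zero _ (neg_ne_zero.mpr one_ne_zero)
    have h5 : u ^ r * PowerSeries.rescale (-1) (F 0) = PowerSeries.X ^ r * E ^ r := by
      apply mul_left_cancel₀ hm1
      calc (-1 : PowerSeries ℂ) ^ r * (u ^ r * PowerSeries.rescale (-1) (F 0))
          = (-u) ^ r * PowerSeries.rescale (-1) (F 0) := by rw [neg_pow u]; ring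
        _ = (-PowerSeries.X) ^ r * E ^ r := h3
        _ = (-1 : PowerSeries ℂ) ^ r * (PowerSeries.X ^ r * E ^ r) := by
            rw [neg_pow (PowerSeries.X : PowerSeries ℂ)]; ring
    -- h5 : u ^ r * rescale (-1) (F 0) = X ^ r * E ^ r
    have h6 : u ^ r * PowerSeries.rescale (-1) (F 0) = u ^ r * (E ^ r * F 0) := by
      rw [h5]
      linear_combination (E ^ r) * h0.symm
    exact mul_left_cancel₀ (pow_ne_zero _ hune) h6
  -- the odd-part series
  obtain ⟨P, hP⟩ : ∃ P : PowerSeries ℂ, P = PowerSeries.mk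
      (fun j => if Even j then B (j + 1) 0 / ((j + 1).factorial : ℂ) else 0) := ⟨_, rfl⟩
  have hXP : PowerSeries.C 2 * (PowerSeries.X * P) = F 0 - PowerSeries.rescale (-1) (F 0) := by
    ext j
    rw [hP, PowerSeries.coeff_C_mul, map_sub, hF]
    cases j with
    | zero => simp [PowerSeries.coeff_zero_X_mul]
    | succ i =>
      rw [PowerSeries.coeff_succ_X_mul, PowerSeries.coeff_rescale]
      simp only [PowerSeries.coeff_mk]
      rcases Nat.even_or_odd i with he | ho
      · rw [if_pos he]
        have : (-1 : ℂ) ^ (i + 1) = -1 := by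
          rw [Odd.neg_one_pow]; exact Even.add_one he
        rw [this]; ring
      · rw [if_neg (Nat.not_even_iff_odd.mpr ho)]
        have : (-1 : ℂ) ^ (i + 1) = 1 := by
          rw [Even.neg_one_pow]; exact Odd.add_one ho
        rw [this]; ring
  -- the rescaled ordinary-Bernoulli series
  obtain ⟨Q, hQdef⟩ : ∃ Q : PowerSeries ℂ, Q = PowerSeries.mk
      (fun m => (r : ℂ) ^ ((m : ℤ) - 1) * (Bc m).eval (x / (r : ℂ)) / (m.factorial : ℂ)) :=
    ⟨_, rfl⟩
  have hFB : (PowerSeries.mk fun m => (Bc m).eval (x / (r : ℂ)) / (m.factorial : ℂ)) * u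
      = PowerSeries.X * PowerSeries.rescale (x / (r : ℂ)) E := by
    have h := Polynomial.bernoulli_generating_function (A := ℂ) (x / (r : ℂ))
    have hmk : (PowerSeries.mk fun m =>
          Polynomial.aeval (x / (r : ℂ)) ((1 / (m.factorial : ℚ)) • Polynomial.bernoulli m))
        = PowerSeries.mk fun m => (Bc m).eval (x / (r : ℂ)) / (m.factorial : ℂ) := by
      ext m
      rw [PowerSeries.coeff_mk, PowerSeries.coeff_mk, bc_eval_eq, map_smul, Rat.smul_def]
      push_cast
      ring
    rwa [hmk] at h
  have hresc := congrArg (PowerSeries.rescale (r : ℂ)) hFB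
  rw [map_mul, map_mul, PowerSeries.rescale_X, PowerSeries.rescale_rescale,
    div_mul_cancel₀ x hrC] at hresc
  have hrE : PowerSeries.rescale (r : ℂ) u = E ^ r - 1 := by
    rw [hu, map_sub, map_one, PowerSeries.exp_pow_eq_rescale_exp]
  have hrFB : PowerSeries.rescale (r : ℂ)
        (PowerSeries.mk fun m => (Bc m).eval (x / (r : ℂ)) / (m.factorial : ℂ))
      = PowerSeries.C (r : ℂ) * Q := by
    rw [hQdef, PowerSeries.rescale_mk]
    ext m
    rw [PowerSeries.coeff_mk, PowerSeries.coeff_C_mul, PowerSeries.coeff_mk,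
      show ((m : ℤ) - 1) = (m : ℤ) + (-1) by ring, zpow_add₀ hrC, zpow_natCast, zpow_neg_one]
    field_simp
  rw [hrE, hrFB] at hresc
  have hCr : (PowerSeries.C (r : ℂ)) ≠ 0 := by
    intro hc; exact hrC (by simpa using congrArg (PowerSeries.constantCoeff) hc)
  have hQ : Q * (E ^ r - 1) = PowerSeries.X * PowerSeries.rescale x E := by
    apply mul_left_cancel₀ hCr
    calc PowerSeries.C (r : ℂ) * (Q * (E ^ r - 1))
        = PowerSeries.C (r : ℂ) * Q * (E ^ r - 1) := by ring
      _ = PowerSeries.C (r : ℂ) * PowerSeries.X * PowerSeries.rescale x E := hresc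
      _ = PowerSeries.C (r : ℂ) * (PowerSeries.X * PowerSeries.rescale x E) := by ring
  -- the target series
  obtain ⟨G, hGdef⟩ : ∃ G : PowerSeries ℂ, G = PowerSeries.mk (fun m =>
      (-2 * ∑ k ∈ Finset.range (m / 2 + 1),
        (r : ℂ) ^ ((m : ℤ) - 2 * (k : ℤ) - 1) * (B (2 * k + 1) 0 / ((2 * (k : ℂ) + 1))) *
          (m.choose (2 * k) : ℂ) * (Bc (m - 2 * k)).eval (x / (r : ℂ))) / (m.factorial : ℂ)) :=
    ⟨_, rfl⟩
  have hG : G = -(PowerSeries.C 2) * (P * Q) := by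
    ext m
    rw [hGdef]
    conv_rhs => rw [hP, hQdef, neg_mul, map_neg, PowerSeries.coeff_C_mul, PowerSeries.coeff_mul]
    simp only [PowerSeries.coeff_mk]
    rw [Finset.Nat.sum_antidiagonal_eq_sum_range_succ_mk]
    simp only [ite_mul, zero_mul]
    rw [sum_even_range m (fun i => B (i + 1) 0 / ((i + 1).factorial : ℂ) *
      ((r : ℂ) ^ (((m - i : ℕ) : ℤ) - 1) * (Bc (m - i)).eval (x / (r : ℂ)) /
        ((m - i).factorial : ℂ)))]
    have hfne : (m.factorial : ℂ) ≠ 0 := Nat.cast_ne_zero.mpr m.factorial_ne_zero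
    rw [div_eq_iff hfne, neg_mul, neg_mul, neg_inj, mul_assoc, Finset.sum_mul]
    congr 1
    refine Finset.sum_congr rfl (fun k hk => ?_)
    have h2k : 2 * k ≤ m := by
      have := Finset.mem_range.mp hk; omega
    have hcastsub : (((m - 2 * k : ℕ)) : ℤ) = (m : ℤ) - 2 * (k : ℤ) := by
      push_cast [Nat.cast_sub h2k]; ring
    rw [hcastsub]
    have hfacs : (m.factorial : ℂ) =
        (m.choose (2 * k) : ℂ) * ((2 * k).factorial : ℂ) * (((m - 2 * k)).factorial : ℂ) := by
      exact_mod_cast congrArg (Nat.cast (R := ℂ))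
        (Nat.choose_mul_factorial_mul_factorial h2k).symm
    have hf1 : (((2 * k + 1).factorial : ℕ) : ℂ) = (2 * (k : ℂ) + 1) * ((2 * k).factorial : ℂ) := by
      rw [Nat.factorial_succ]; push_cast; ring
    have hc1 : (2 * (k : ℂ) + 1) ≠ 0 := by
      have : ((2 * k + 1 : ℕ) : ℂ) ≠ 0 := Nat.cast_ne_zero.mpr (by omega)
      push_cast at this; exact this
    have hfne1 : (((2 * k + 1).factorial : ℕ) : ℂ) ≠ 0 :=
      Nat.cast_ne_zero.mpr (Nat.factorial_ne_zero _)
    have hfne2 : (((m - 2 * k).factorial : ℕ) : ℂ) ≠ 0 :=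
      Nat.cast_ne_zero.mpr (Nat.factorial_ne_zero _)
    have hfne0 : (((2 * k).factorial : ℕ) : ℂ) ≠ 0 :=
      Nat.cast_ne_zero.mpr (Nat.factorial_ne_zero _)
    rw [hfacs, hf1]
    field_simp
  -- combine everything
  have hc2 : (PowerSeries.C (2 : ℂ)) ≠ 0 := by
    intro hc; simpa using congrArg (PowerSeries.constantCoeff) hc
  have hXG : PowerSeries.X * G = F 0 * (PowerSeries.X * PowerSeries.rescale x E) := by
    apply mul_left_cancel₀ hc2
    linear_combination (PowerSeries.C 2 * PowerSeries.X) * hG +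
      (-(PowerSeries.C 2 * Q)) * hXP + (PowerSeries.C 2 * Q) * hnegF +
      (PowerSeries.C 2 * F 0) * hQ
  have hG_eq_F : G = F x := by
    have hXu : (PowerSeries.X * u ^ r) ≠ 0 := mul_ne_zero hXne (pow_ne_zero _ hune)
    apply mul_left_cancel₀ hXu
    calc PowerSeries.X * u ^ r * G = u ^ r * (PowerSeries.X * G) := by ring
      _ = u ^ r * (F 0 * (PowerSeries.X * PowerSeries.rescale x E)) := by rw [hXG]
      _ = (u ^ r * F 0) * (PowerSeries.X * PowerSeries.rescale x E) := by ring
      _ = PowerSeries.X ^ r * (PowerSeries.X * PowerSeries.rescale x E) := by rw [h0]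
      _ = PowerSeries.X * (PowerSeries.X ^ r * PowerSeries.rescale x E) := by ring
      _ = PowerSeries.X * (u ^ r * F x) := by rw [h1]
      _ = PowerSeries.X * u ^ r * F x := by ring
  have hco := congrArg (PowerSeries.coeff n) hG_eq_F
  rw [hGdef, hF] at hco
  simp only [PowerSeries.coeff_mk] at hco
  have hfne : (n.factorial : ℂ) ≠ 0 := Nat.cast_ne_zero.mpr n.factorial_ne_zero
  have := mul_right_cancel₀ hfne ((div_eq_div_iff hfne hfne).mp hco)
  exact this.symm
end

section
/- Let r and n be integers with n ≥ r ≥ 2 and let x ∈ ℂ. Then Bₙ⁽ʳ⁾(x) = −2·Σ_{k : 2k+1 ≤ r−1} r^{n−2k−1}·(s(r, r−2k−1)/((2k+1)·C(r−1, 2k+1)))·C(n,2k)·B_{n−2k}(x/r) − 2·Σ_{k : r ≤ 2k+1 and 2k ≤ n} r^{n−2k−1}·C(2k, r−1)·(Σ_{j=1}^{r} (−1)^{j−1}·s(r,j)·B_{2k+1−r+j}/(2k+1−r+j))·C(n,2k)·B_{n−2k}(x/r), where B_m denotes the m-th Bernoulli number, C(·,·) binomial coefficients, and s(·,·) signed Stirling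 numbers of the first kind. -/
/-- The `n`-th Bernoulli number, as a complex number (so `Bnum 1 = -1/2`). -/
noncomputable def Bnum (n : ℕ) : ℂ := algebraMap ℚ ℂ (bernoulli n)

/-- The signed Stirling number of the first kind `s(n, k)`, defined as the coefficient of
`x^k` in the falling factorial `x (x-1) ⋯ (x - n + 1)`. -/
noncomputable def stir (n k : ℕ) : ℂ :=
  (∏ i ∈ Finset.range n, (Polynomial.X - Polynomial.C (i : ℂ))).coeff k


open PowerSeries Finset

namespace Thm33

noncomputable def W : ℂ⟦X⟧ := bernoulliPowerSeries ℂ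

lemma W_mul : W * (exp ℂ - 1) = X := bernoulliPowerSeries_mul_exp_sub_one ℂ

lemma coeff_W (n : ℕ) : coeff n W = Bnum n / (n.factorial : ℂ) := by
  simp [W, bernoulliPowerSeries, Bnum, map_div₀]

lemma expm1_ne : (exp ℂ - 1) ≠ 0 := by
  intro h
  have : (coeff 1) (exp ℂ - 1) = 0 := by rw [h]; simp
  simp [coeff_exp] at this

-- Stirling lemmas
lemma stir_succ (n k : ℕ) : stir (n+1) (k+1) = stir n k - (n : ℂ) * stir n (k+1) := by
  unfold stir
  rw [prod_range_succ, mul_sub, Polynomial.coeff_sub, Polynomial.coeff_mul_X, mul_comm,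
    Polynomial.coeff_C_mul]

lemma stir_zero (n : ℕ) (hn : 1 ≤ n) : stir n 0 = 0 := by
  unfold stir
  rw [Polynomial.coeff_zero_eq_eval_zero, Polynomial.eval_prod]
  refine Finset.prod_eq_zero (i := 0) (by simp; omega) ?_
  simp

lemma stir_one_one : stir 1 1 = 1 := by
  unfold stir
  simp

lemma natDegree_ff (n : ℕ) :
    (∏ i ∈ Finset.range n, (Polynomial.X - Polynomial.C (i : ℂ))).natDegree ≤ n := by
  refine le_trans (Polynomial.natDegree_prod_le _ _) ?_
  calc ∑ i ∈ range n, (Polynomial.X - Polynomial.C (i:ℂ)).natDegree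
      ≤ ∑ _i ∈ range n, 1 := by
        refine Finset.sum_le_sum fun i _ => ?_
        exact le_trans (Polynomial.natDegree_sub_le _ _) (by simp)
    _ = n := by simp

lemma stir_eq_zero (n k : ℕ) (h : n < k) : stir n k = 0 := by
  unfold stir
  exact Polynomial.coeff_eq_zero_of_natDegree_lt (lt_of_le_of_lt (natDegree_ff n) h)


noncomputable def V (j : ℕ) : ℂ⟦X⟧ :=
  PowerSeries.mk fun M => Bnum (M + j) / (((M + j : ℕ) : ℂ) * (M.factorial : ℂ))

lemma coeff_V (j M : ℕ) :
    coeff M (V j) = Bnum (M + j) / (((M + j : ℕ) : ℂ) * (M.factorial : ℂ)) := by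
  simp [V]

lemma derivative_V (j : ℕ) : d⁄dX ℂ (V j) = V (j + 1) := by
  ext M
  rw [PowerSeries.coeff_derivative, coeff_V, coeff_V]
  have harg : M + 1 + j = M + (j + 1) := by omega
  rw [harg, Nat.factorial_succ, Nat.cast_mul]
  rw [show ((M+1 : ℕ) : ℂ) = (M : ℂ) + 1 by push_cast; ring]
  have key : ∀ (B c f g : ℂ), g ≠ 0 → B / (c * (g * f)) * g = B / (c * f) := by
    intros B c f g hg
    rw [mul_comm g f, ← mul_assoc, div_mul_eq_mul_div, mul_div_mul_right _ _ hg]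
  exact key _ _ _ ((M : ℂ) + 1) (by exact_mod_cast Nat.succ_ne_zero M)

lemma X_mul_V_one : X * V 1 = W - 1 := by
  ext M
  cases M with
  | zero =>
    rw [map_sub, coeff_W]
    simp [Bnum]
  | succ M =>
    rw [PowerSeries.coeff_succ_X_mul, coeff_V, map_sub, coeff_W]
    have : coeff (M+1) (1 : ℂ⟦X⟧) = 0 := by
      simp
    rw [this, sub_zero, Nat.factorial_succ]
    push_cast
    ring

lemma derivative_exp : d⁄dX ℂ (exp ℂ) = exp ℂ := by
  ext M
  rw [PowerSeries.coeff_derivative, coeff_exp, coeff_exp]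
  have : ((M+1).factorial : ℚ) = ((M+1 : ℕ) : ℚ) * (M.factorial : ℚ) := by
    rw [Nat.factorial_succ]; push_cast; ring
  rw [map_div₀, map_div₀, map_one, this]
  push_cast
  have hM1 : ((M+1 : ℕ) : ℂ) ≠ 0 := by exact_mod_cast Nat.succ_ne_zero M
  have hMf : ((M.factorial : ℕ) : ℂ) ≠ 0 := by exact_mod_cast M.factorial_ne_zero
  field_simp

lemma X_mul_dW : X * d⁄dX ℂ W = W - X * W - W ^ 2 := by
  have h2 : (d⁄dX ℂ W) * (exp ℂ - 1) + W * exp ℂ = 1 := by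
    have := congrArg (d⁄dX ℂ) W_mul
    rw [Derivation.leibniz] at this
    simp only [map_sub, derivative_exp, Derivation.map_one_eq_zero, PowerSeries.derivative_X,
      smul_eq_mul, sub_zero] at this
    linear_combination this
  linear_combination W * h2 - (d⁄dX ℂ W + W) * W_mul

lemma derivative_C_mul (a : ℂ) (f : ℂ⟦X⟧) :
    d⁄dX ℂ (PowerSeries.C a * f) = PowerSeries.C a * d⁄dX ℂ f := by
  rw [Derivation.leibniz]
  simp [smul_eq_mul]

lemma X_mul_derivative_X_pow (m : ℕ) :
    X * d⁄dX ℂ ((X : ℂ⟦X⟧)^m) = PowerSeries.C (m : ℂ) * (X:ℂ⟦X⟧)^m := by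
  cases m with
  | zero => simp
  | succ m =>
    rw [Derivation.leibniz_pow]
    simp only [PowerSeries.derivative_X, Nat.succ_sub_one, smul_eq_mul, mul_one]
    rw [nsmul_eq_mul]
    push_cast
    rw [show ((X:ℂ⟦X⟧) * (((m:ℂ⟦X⟧) + 1) * X ^ m)) = ((m:ℂ⟦X⟧)+1) * X^(m+1) by ring]
    congr 1
    rw [map_add, map_one, map_natCast]

noncomputable def Phi (r : ℕ) : ℂ⟦X⟧ :=
  ∑ i ∈ range r, PowerSeries.C ((-1)^i * stir r (i+1)) * V (i+1)

noncomputable def Cp (r : ℕ) : ℂ⟦X⟧ :=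
  ∑ i ∈ range r, PowerSeries.C ((i.factorial : ℂ) * stir r (i+1)) * (X:ℂ⟦X⟧)^(r-(i+1))

lemma Phi_succ (r : ℕ) (hr : 1 ≤ r) :
    Phi (r+1) = -(d⁄dX ℂ (Phi r)) - PowerSeries.C (r:ℂ) * Phi r := by
  have hd : d⁄dX ℂ (Phi r) = ∑ i ∈ range r, PowerSeries.C ((-1)^i * stir r (i+1)) * V (i+2) := by
    unfold Phi
    rw [map_sum]
    refine sum_congr rfl fun i _ => ?_
    rw [derivative_C_mul, derivative_V]
  rw [hd]
  unfold Phi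
  rw [Finset.mul_sum]
  have step1 : ∀ i ∈ range (r+1),
      PowerSeries.C ((-1)^i * stir (r+1) (i+1)) * V (i+1)
        = PowerSeries.C ((-1)^i * stir r i) * V (i+1)
          - PowerSeries.C ((r:ℂ)) * (PowerSeries.C ((-1)^i * stir r (i+1)) * V (i+1)) := by
    intro i _
    rw [stir_succ]
    rw [show (-1:ℂ)^i * (stir r i - (r:ℂ) * stir r (i+1))
        = ((-1)^i * stir r i) - (r:ℂ) * ((-1)^i * stir r (i+1)) by ring]
    simp only [map_sub, map_mul]
    ring
  rw [Finset.sum_congr rfl step1, Finset.sum_sub_distrib]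
  congr 1
  · rw [Finset.sum_range_succ']
    rw [show PowerSeries.C ((-1)^0 * stir r 0) * V (0+1) = 0 by
      rw [stir_zero r hr]; simp]
    rw [add_zero, ← Finset.sum_neg_distrib]
    refine sum_congr rfl fun i _ => ?_
    rw [show (-1:ℂ)^(i+1) * stir r (i+1) = -((-1)^i * stir r (i+1)) by ring]
    rw [map_neg]
    ring
  · rw [Finset.sum_range_succ]
    rw [stir_eq_zero r (r+1) (by omega)]
    simp

lemma Cp_succ (r : ℕ) (hr : 1 ≤ r) :
    Cp (r+1) = PowerSeries.C (r:ℂ) * Cp r - PowerSeries.C (r:ℂ) * (X * Cp r)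
      - X * d⁄dX ℂ (Cp r) := by
  have hd : X * d⁄dX ℂ (Cp r)
      = ∑ i ∈ range r, PowerSeries.C ((i.factorial : ℂ) * stir r (i+1))
          * (PowerSeries.C (((r-(i+1) : ℕ)) : ℂ) * (X:ℂ⟦X⟧)^(r-(i+1))) := by
    unfold Cp
    rw [map_sum, Finset.mul_sum]
    refine sum_congr rfl fun i _ => ?_
    rw [derivative_C_mul, show X * (PowerSeries.C ((i.factorial : ℂ) * stir r (i+1)) *
        d⁄dX ℂ ((X:ℂ⟦X⟧)^(r-(i+1)))) = PowerSeries.C ((i.factorial : ℂ) * stir r (i+1)) *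
        (X * d⁄dX ℂ ((X:ℂ⟦X⟧)^(r-(i+1)))) by ring, X_mul_derivative_X_pow]
  have h1 : Cp (r+1) = (∑ i ∈ range (r+1), PowerSeries.C ((i.factorial:ℂ) * stir r i) * (X:ℂ⟦X⟧)^(r-i))
      - (∑ i ∈ range (r+1), PowerSeries.C ((r:ℂ) * ((i.factorial:ℂ) * stir r (i+1))) * (X:ℂ⟦X⟧)^(r-i)) := by
    unfold Cp
    rw [← Finset.sum_sub_distrib]
    refine sum_congr rfl fun i _ => ?_
    rw [stir_succ, show r+1-(i+1) = r-i from by omega]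
    rw [show (i.factorial:ℂ) * (stir r i - (r:ℂ) * stir r (i+1))
        = (i.factorial:ℂ) * stir r i - (r:ℂ) * ((i.factorial:ℂ) * stir r (i+1)) by ring]
    rw [map_sub, sub_mul]
  have h2 : (∑ i ∈ range (r+1), PowerSeries.C ((i.factorial:ℂ) * stir r i) * (X:ℂ⟦X⟧)^(r-i))
      = ∑ i ∈ range r, PowerSeries.C (((i+1).factorial:ℂ) * stir r (i+1)) * (X:ℂ⟦X⟧)^(r-(i+1)) := by
    rw [Finset.sum_range_succ']
    rw [show PowerSeries.C ((Nat.factorial 0 : ℂ) * stir r 0) * (X:ℂ⟦X⟧)^(r-0) = 0 by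
      rw [stir_zero r hr]; simp]
    rw [add_zero]
  have h3 : (∑ i ∈ range (r+1), PowerSeries.C ((r:ℂ) * ((i.factorial:ℂ) * stir r (i+1))) * (X:ℂ⟦X⟧)^(r-i))
      = ∑ i ∈ range r, PowerSeries.C ((r:ℂ) * ((i.factorial:ℂ) * stir r (i+1))) * (X:ℂ⟦X⟧)^(r-i) := by
    rw [Finset.sum_range_succ]
    rw [stir_eq_zero r (r+1) (by omega)]
    simp
  have e1 : PowerSeries.C (r:ℂ) * Cp r
      = ∑ i ∈ range r, PowerSeries.C (r:ℂ) * (PowerSeries.C ((i.factorial:ℂ) * stir r (i+1)) * (X:ℂ⟦X⟧)^(r-(i+1))) := by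
    unfold Cp; rw [Finset.mul_sum]
  have e2 : PowerSeries.C (r:ℂ) * (X * Cp r)
      = ∑ i ∈ range r, PowerSeries.C (r:ℂ) * (X * (PowerSeries.C ((i.factorial:ℂ) * stir r (i+1)) * (X:ℂ⟦X⟧)^(r-(i+1)))) := by
    unfold Cp; rw [Finset.mul_sum, Finset.mul_sum]
  rw [h1, h2, h3, hd, e1, e2]
  rw [← Finset.sum_sub_distrib, ← Finset.sum_sub_distrib, ← Finset.sum_sub_distrib]
  refine sum_congr rfl fun i hi => ?_
  have hi' : i + 1 ≤ r := mem_range.mp hi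
  have hc : ((r-(i+1):ℕ) : ℂ) = (r : ℂ) - (((i+1):ℕ):ℂ) := by
    rw [Nat.cast_sub hi']
  rw [hc, show r - i = r - (i+1) + 1 from by omega, pow_succ]
  rw [show (((i+1).factorial : ℕ):ℂ) = (((i+1):ℕ):ℂ) * ((i.factorial:ℕ):ℂ) by
    rw [Nat.factorial_succ]; push_cast; ring]
  simp only [map_sub, map_mul]
  push_cast
  ring

lemma claim (r : ℕ) (hr : 1 ≤ r) :
    X ^ r * Phi r + Cp r = PowerSeries.C (((r-1).factorial : ℂ)) * W ^ r := by
  induction r, hr using Nat.le_induction with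
  | base =>
    unfold Phi Cp
    rw [Finset.sum_range_one, Finset.sum_range_one]
    rw [stir_one_one]
    simp only [zero_add, pow_one, Nat.sub_self, pow_zero, Nat.factorial_zero, Nat.cast_one,
      map_one, mul_one, one_mul]
    rw [X_mul_V_one]
    ring
  | succ r hr ih =>
    obtain ⟨m, rfl⟩ : ∃ m, r = m + 1 := ⟨r - 1, by omega⟩
    simp only [Nat.add_sub_cancel] at ih ⊢
    have h2 : X^(m+1) * d⁄dX ℂ (Phi (m+1)) + PowerSeries.C (((m+1:ℕ)):ℂ) * ((X:ℂ⟦X⟧)^m * Phi (m+1))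
        + d⁄dX ℂ (Cp (m+1))
        = PowerSeries.C ((m.factorial : ℂ)) * (PowerSeries.C (((m+1:ℕ)):ℂ) * (W^m * d⁄dX ℂ W)) := by
      have := congrArg (d⁄dX ℂ) ih
      rw [map_add, Derivation.leibniz, Derivation.leibniz_pow, derivative_C_mul,
        Derivation.leibniz_pow] at this
      simp only [PowerSeries.derivative_X, Nat.add_sub_cancel, smul_eq_mul, mul_one,
        nsmul_eq_mul] at this
      rw [show (((m+1:ℕ)) : ℂ⟦X⟧) = PowerSeries.C (((m+1:ℕ)):ℂ) by rw [map_natCast]] at this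
      linear_combination this
    have hfact : (((m+1).factorial : ℕ) : ℂ) = ((m+1:ℕ):ℂ) * ((m.factorial : ℕ) : ℂ) := by
      rw [Nat.factorial_succ]; push_cast; ring
    rw [Phi_succ (m+1) (by omega), Cp_succ (m+1) (by omega), hfact, map_mul]
    linear_combination (PowerSeries.C (((m+1:ℕ)):ℂ)) * (1 - X) * ih - X * h2
      - (PowerSeries.C (((m+1:ℕ)):ℂ) * PowerSeries.C ((m.factorial : ℂ))) * W^m * X_mul_dW

-- ### Stage 4a : coefficient extraction
lemma coeff_Cp_lt (r N : ℕ) (h : N < r) :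
    coeff N (Cp r) = ((r-1-N).factorial : ℂ) * stir r (r-N) := by
  unfold Cp
  rw [map_sum]
  rw [Finset.sum_eq_single (r-1-N)]
  · rw [coeff_C_mul, coeff_X_pow, if_pos (by omega), mul_one,
      show r-1-N+1 = r-N from by omega]
  · intro i hi hne
    rw [coeff_C_mul, coeff_X_pow, if_neg (by rw [mem_range] at hi; omega), mul_zero]
  · intro h'
    exact absurd (mem_range.mpr (by omega)) h'

lemma coeff_X_pow_mul_ge (f : ℂ⟦X⟧) (r N : ℕ) (h : r ≤ N) :
    coeff N ((X:ℂ⟦X⟧)^r * f) = coeff (N-r) f := by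
  rw [show N = N - r + r from by omega, PowerSeries.coeff_X_pow_mul]
  rw [Nat.add_sub_cancel]

lemma coeff_X_pow_mul_lt (f : ℂ⟦X⟧) (r N : ℕ) (h : N < r) :
    coeff N ((X:ℂ⟦X⟧)^r * f) = 0 := by
  rw [PowerSeries.coeff_mul]
  refine Finset.sum_eq_zero fun p hp => ?_
  rw [coeff_X_pow, if_neg, zero_mul]
  rw [Finset.HasAntidiagonal.mem_antidiagonal] at hp
  omega

lemma L1 (r N : ℕ) (hr : 1 ≤ r) (h : N < r) :
    (((r-1).factorial : ℕ) : ℂ) * coeff N (W^r)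
      = ((r-1-N).factorial : ℂ) * stir r (r-N) := by
  have := congrArg (coeff N) (claim r hr)
  rw [map_add, coeff_C_mul, coeff_X_pow_mul_lt _ _ _ h, zero_add, coeff_Cp_lt r N h] at this
  rw [← this]

lemma L2 (r N : ℕ) (hr : 1 ≤ r) (h : r ≤ N) :
    (((r-1).factorial : ℕ) : ℂ) * coeff N (W^r)
      = (∑ i ∈ range r, (-1:ℂ)^i * stir r (i+1) * (Bnum (N-r+(i+1)) / ((N-r+(i+1) : ℕ) : ℂ)))
          / (((N-r).factorial : ℕ) : ℂ) := by
  have hC : coeff N (Cp r) = 0 := by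
    unfold Cp
    rw [map_sum]
    refine Finset.sum_eq_zero fun i hi => ?_
    rw [coeff_C_mul, coeff_X_pow, if_neg (by rw [mem_range] at hi; omega), mul_zero]
  have := congrArg (coeff N) (claim r hr)
  rw [map_add, coeff_C_mul, coeff_X_pow_mul_ge _ _ _ h, hC, add_zero] at this
  rw [← this]
  unfold Phi
  rw [map_sum, Finset.sum_div]
  refine Finset.sum_congr rfl fun i _ => ?_
  rw [coeff_C_mul, coeff_V]
  rw [div_mul_eq_div_div]
  ring
-- ### Stage 4b : symmetry and F-coefficients
lemma rescale_neg_one_W : rescale (-1 : ℂ) W = exp ℂ * W := by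
  have h := congrArg (rescale (-1:ℂ)) W_mul
  rw [map_mul, map_sub, map_one, rescale_neg_one_X] at h
  have u : exp ℂ * rescale (-1:ℂ) (exp ℂ) = 1 := exp_mul_exp_neg_eq_one (A := ℂ)
  apply mul_right_cancel₀ expm1_ne
  linear_combination (-(exp ℂ)) * h + (rescale (-1:ℂ) W) * u - (exp ℂ) * W_mul

lemma key_sym (r : ℕ) : rescale (-1:ℂ) (W^r) = rescale ((r:ℕ):ℂ) (exp ℂ) * W^r := by
  rw [map_pow, rescale_neg_one_W, mul_pow, exp_pow_eq_rescale_exp]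

lemma coeff_sym (r a : ℕ) :
    coeff a (rescale ((r:ℕ):ℂ) (exp ℂ) * W^r) = (-1)^a * coeff a (W^r) := by
  rw [← key_sym, coeff_rescale]

noncomputable def D (r : ℕ) : ℂ⟦X⟧ :=
  PowerSeries.mk fun a => (r:ℂ)^(a+1) / (((a+1).factorial : ℕ) : ℂ)

lemma coeff_rescale_exp (r a : ℕ) :
    coeff a (rescale ((r:ℕ):ℂ) (exp ℂ)) = (r:ℂ)^a / ((a.factorial : ℕ) : ℂ) := by
  rw [coeff_rescale, coeff_exp]
  rw [show (algebraMap ℚ ℂ) (1 / (a.factorial : ℚ)) = 1 / ((a.factorial : ℕ) : ℂ) by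
    rw [map_div₀, map_one, map_natCast]]
  ring

lemma coeff_D_mul (r a : ℕ) :
    coeff a (D r * W^r) = ((-1:ℂ)^(a+1) - 1) * coeff (a+1) (W^r) := by
  have exp_side : coeff (a+1) (rescale ((r:ℕ):ℂ) (exp ℂ) * W^r)
      = coeff (a+1) (W^r)
        + ∑ p ∈ antidiagonal a, coeff (p.1+1) (rescale ((r:ℕ):ℂ) (exp ℂ)) * coeff p.2 (W^r) := by
    rw [PowerSeries.coeff_mul, Finset.Nat.sum_antidiagonal_succ]
    congr 1
    rw [coeff_rescale_exp]
    simp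
  rw [coeff_sym] at exp_side
  have hD : coeff a (D r * W^r)
      = ∑ p ∈ antidiagonal a, coeff (p.1+1) (rescale ((r:ℕ):ℂ) (exp ℂ)) * coeff p.2 (W^r) := by
    rw [PowerSeries.coeff_mul]
    refine Finset.sum_congr rfl fun p _ => ?_
    rw [coeff_rescale_exp]
    simp [D]
  rw [hD]
  linear_combination -exp_side

lemma hXD (r : ℕ) : X * D r = rescale ((r:ℕ):ℂ) (exp ℂ) - 1 := by
  ext M
  cases M with
  | zero =>
    rw [map_sub]
    simp [coeff_rescale_exp]
  | succ M =>
    rw [coeff_succ_X_mul, map_sub, coeff_rescale_exp]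
    simp [D]

lemma hDW (r : ℕ) :
    D r * rescale ((r:ℕ):ℂ) W = PowerSeries.C ((r:ℕ):ℂ) := by
  have h : X * (D r * rescale ((r:ℕ):ℂ) W) = X * PowerSeries.C ((r:ℕ):ℂ) := by
    rw [← mul_assoc, hXD, sub_mul, one_mul]
    rw [show rescale ((r:ℕ):ℂ) (exp ℂ) * rescale ((r:ℕ):ℂ) W - rescale ((r:ℕ):ℂ) W
        = rescale ((r:ℕ):ℂ) ((exp ℂ - 1) * W) by
      rw [map_mul, map_sub, map_one, sub_mul, one_mul]]
    rw [mul_comm (exp ℂ - 1) W, W_mul, rescale_X]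
    ring
  exact mul_left_cancel₀ PowerSeries.X_ne_zero h
-- ### Stage 5 : assembly
lemma neg_one_pow_odd (k : ℕ) : (-1:ℂ)^(2*k+1) = -1 := by
  rw [pow_succ, pow_mul]
  norm_num

lemma factorial_cast_ne (m : ℕ) : ((m.factorial : ℕ) : ℂ) ≠ 0 := by
  exact_mod_cast m.factorial_ne_zero

lemma scalar_low {nf r' P T Q rp E S u v Cn tk : ℂ}
    (hr' : r' ≠ 0) (hS : S ≠ 0) (hu : u ≠ 0) (hv : v ≠ 0) (hP : P ≠ 0) (htk : tk ≠ 0)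
    (f1 : Cn * tk * S = nf) (f2 : v * (u * tk) * P = Q) :
    nf * (r'⁻¹ * ((-1 - 1) * (P * T / Q)) * (rp * (E / S)))
      = -2 * (rp * r'⁻¹ * (T / (u * v)) * Cn * E) := by
  subst f1 f2
  have hcan : tk * tk⁻¹ * (S * S⁻¹) * (P * P⁻¹) * (r' * r'⁻¹) * (u * u⁻¹) * (v * v⁻¹) = 1 := by
    rw [mul_inv_cancel₀ htk, mul_inv_cancel₀ hS, mul_inv_cancel₀ hP, mul_inv_cancel₀ hr',
      mul_inv_cancel₀ hu, mul_inv_cancel₀ hv]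
    norm_num
  field_simp
  ring

lemma scalar_high {nf r' W2 Q rp E S v2 Cn tk Sm : ℂ}
    (hr' : r' ≠ 0) (hS : S ≠ 0) (hW2 : W2 ≠ 0) (hQ : Q ≠ 0)
    (f1 : Cn * tk * S = nf) (f2 : v2 * Q * W2 = tk) :
    nf * (r'⁻¹ * ((-1 - 1) * (Sm / (W2 * Q))) * (rp * (E / S)))
      = -2 * (rp * r'⁻¹ * v2 * Sm * Cn * E) := by
  subst f2
  subst f1
  have hcan : W2 * W2⁻¹ * (Q * Q⁻¹) * (S * S⁻¹) = 1 := by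
    rw [mul_inv_cancel₀ hW2, mul_inv_cancel₀ hQ, mul_inv_cancel₀ hS]
    norm_num
  linear_combination (-(2:ℂ) * rp * r'⁻¹ * v2 * Sm * Cn * E) * hcan

lemma term_even_low (r n k : ℕ) (hr : 2 ≤ r) (hkn : 2*k ≤ n) (hkr : 2*k+1 ≤ r-1) (x : ℂ) :
    ((n.factorial:ℕ):ℂ) * ((((r:ℕ):ℂ))⁻¹ * (((-1:ℂ)^(2*k+1) - 1) * coeff (2*k+1) (W^r))
        * (((r:ℕ):ℂ)^(n-2*k) * (Polynomial.eval (x/(r:ℂ)) (Bc (n-2*k)) / (((n-2*k).factorial:ℕ):ℂ))))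
    = -2 * ((r : ℂ) ^ ((n : ℤ) - 2 * (k : ℤ) - 1) *
            (stir r (r - 2 * k - 1) /
              ((2 * (k : ℂ) + 1) * ((r - 1).choose (2 * k + 1) : ℂ))) *
            (n.choose (2 * k) : ℂ) * (Bc (n - 2 * k)).eval (x / (r : ℂ))) := by
  have hrne : ((r:ℕ):ℂ) ≠ 0 := by
    have : r ≠ 0 := by omega
    exact_mod_cast this
  have hodd : (-1:ℂ)^(2*k+1) = -1 := neg_one_pow_odd k
  have hL := L1 r (2*k+1) (by omega) (by omega)
  rw [show r - (2*k+1) = r - 2*k - 1 from by omega,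
    show r-1-(2*k+1) = r-2*k-2 from by omega] at hL
  have hc : coeff (2*k+1) (W^r)
      = (((r-2*k-2).factorial:ℕ):ℂ) * stir r (r-2*k-1) / (((r-1).factorial:ℕ):ℂ) := by
    rw [eq_div_iff (factorial_cast_ne (r-1))]
    linear_combination hL
  have hz : (r:ℂ) ^ ((n:ℤ) - 2*(k:ℤ) - 1) = ((r:ℕ):ℂ)^(n-2*k) * (((r:ℕ):ℂ))⁻¹ := by
    have h' : (n:ℤ) - 2*(k:ℤ) - 1 = ((n - 2*k : ℕ) : ℤ) - 1 := by
      have : ((n - 2*k : ℕ) : ℤ) = (n:ℤ) - 2*(k:ℤ) := by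
        push_cast [Nat.cast_sub hkn]
        ring
      omega
    rw [h', zpow_sub₀ hrne, zpow_natCast, zpow_one, div_eq_mul_inv]
  have f1 : ((n.choose (2*k) : ℕ):ℂ) * (((2*k).factorial:ℕ):ℂ) * (((n-2*k).factorial:ℕ):ℂ)
      = ((n.factorial:ℕ):ℂ) := by
    exact_mod_cast congrArg (fun m : ℕ => (m:ℂ)) (Nat.choose_mul_factorial_mul_factorial hkn)
  have f2 : (((r-1).choose (2*k+1) : ℕ):ℂ) * (((2*k+1).factorial:ℕ):ℂ) * (((r-2*k-2).factorial:ℕ):ℂ)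
      = (((r-1).factorial:ℕ):ℂ) := by
    have h := Nat.choose_mul_factorial_mul_factorial hkr
    rw [show r-1-(2*k+1) = r-2*k-2 from by omega] at h
    exact_mod_cast congrArg (fun m : ℕ => (m:ℂ)) h
  have f3 : (((2*k+1).factorial:ℕ):ℂ) = (2*(k:ℂ)+1) * (((2*k).factorial:ℕ):ℂ) := by
    rw [Nat.factorial_succ]
    push_cast
    ring
  have hch : (((r-1).choose (2*k+1) : ℕ):ℂ) ≠ 0 := by
    have := Nat.choose_pos hkr
    exact_mod_cast this.ne'
  have h2k1 : (2*(k:ℂ)+1) ≠ 0 := by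
    rw [show (2*(k:ℂ)+1) = ((2*k+1:ℕ):ℂ) by push_cast; ring]
    exact_mod_cast Nat.succ_ne_zero (2*k)
  have f2'' : (((r-1).choose (2*k+1) : ℕ):ℂ) * ((2*(k:ℂ)+1) * (((2*k).factorial:ℕ):ℂ))
      * (((r-2*k-2).factorial:ℕ):ℂ) = (((r-1).factorial:ℕ):ℂ) := by
    linear_combination f2 - (((r-1).choose (2*k+1) : ℕ):ℂ) * (((r-2*k-2).factorial:ℕ):ℂ) * f3
  rw [hodd, hc, hz]
  exact scalar_low hrne (factorial_cast_ne (n-2*k)) h2k1 hch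
    (factorial_cast_ne (r-2*k-2)) (factorial_cast_ne (2*k)) f1 f2''

lemma term_even_high (r n k : ℕ) (hr : 2 ≤ r) (hkn : 2*k ≤ n) (hkr : r ≤ 2*k+1) (x : ℂ) :
    ((n.factorial:ℕ):ℂ) * ((((r:ℕ):ℂ))⁻¹ * (((-1:ℂ)^(2*k+1) - 1) * coeff (2*k+1) (W^r))
        * (((r:ℕ):ℂ)^(n-2*k) * (Polynomial.eval (x/(r:ℂ)) (Bc (n-2*k)) / (((n-2*k).factorial:ℕ):ℂ))))
    = -2 * ((r : ℂ) ^ ((n : ℤ) - 2 * (k : ℤ) - 1) * ((2 * k).choose (r - 1) : ℂ) *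
            (∑ j ∈ Finset.Icc 1 r, (-1 : ℂ) ^ (j - 1) * stir r j *
              (Bnum (2 * k + 1 - r + j) / ((2 * k + 1 - r + j : ℕ) : ℂ))) *
            (n.choose (2 * k) : ℂ) * (Bc (n - 2 * k)).eval (x / (r : ℂ))) := by
  have hrne : ((r:ℕ):ℂ) ≠ 0 := by
    have : r ≠ 0 := by omega
    exact_mod_cast this
  have hodd : (-1:ℂ)^(2*k+1) = -1 := neg_one_pow_odd k
  have hL := L2 r (2*k+1) (by omega) (by omega)
  have hIcc : (∑ j ∈ Finset.Icc 1 r, (-1 : ℂ) ^ (j - 1) * stir r j *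
        (Bnum (2 * k + 1 - r + j) / ((2 * k + 1 - r + j : ℕ) : ℂ)))
      = ∑ i ∈ range r, (-1:ℂ)^i * stir r (i+1)
          * (Bnum (2*k+1-r+(i+1)) / ((2*k+1-r+(i+1) : ℕ) : ℂ)) := by
    rw [← Finset.Ico_add_one_right_eq_Icc, Finset.sum_Ico_eq_sum_range]
    refine Finset.sum_congr (by norm_num) fun i _ => ?_
    rw [show 1+i = i+1 from by omega, Nat.add_sub_cancel]
  have hc : coeff (2*k+1) (W^r)
      = (∑ i ∈ range r, (-1:ℂ)^i * stir r (i+1)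
          * (Bnum (2*k+1-r+(i+1)) / ((2*k+1-r+(i+1) : ℕ) : ℂ)))
        / ((((2*k+1-r).factorial:ℕ):ℂ) * (((r-1).factorial:ℕ):ℂ)) := by
    rw [← div_div, eq_div_iff (factorial_cast_ne (r-1))]
    linear_combination hL
  have hz : (r:ℂ) ^ ((n:ℤ) - 2*(k:ℤ) - 1) = ((r:ℕ):ℂ)^(n-2*k) * (((r:ℕ):ℂ))⁻¹ := by
    have h' : (n:ℤ) - 2*(k:ℤ) - 1 = ((n - 2*k : ℕ) : ℤ) - 1 := by
      have : ((n - 2*k : ℕ) : ℤ) = (n:ℤ) - 2*(k:ℤ) := by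
        push_cast [Nat.cast_sub hkn]
        ring
      omega
    rw [h', zpow_sub₀ hrne, zpow_natCast, zpow_one, div_eq_mul_inv]
  have f1 : ((n.choose (2*k) : ℕ):ℂ) * (((2*k).factorial:ℕ):ℂ) * (((n-2*k).factorial:ℕ):ℂ)
      = ((n.factorial:ℕ):ℂ) := by
    exact_mod_cast congrArg (fun m : ℕ => (m:ℂ)) (Nat.choose_mul_factorial_mul_factorial hkn)
  have f2 : (((2*k).choose (r-1) : ℕ):ℂ) * (((r-1).factorial:ℕ):ℂ) * (((2*k+1-r).factorial:ℕ):ℂ)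
      = (((2*k).factorial:ℕ):ℂ) := by
    have h := Nat.choose_mul_factorial_mul_factorial (show r-1 ≤ 2*k from by omega)
    rw [show 2*k-(r-1) = 2*k+1-r from by omega] at h
    exact_mod_cast congrArg (fun m : ℕ => (m:ℂ)) h
  rw [hodd, hc, hz, hIcc]
  exact scalar_high hrne (factorial_cast_ne (n-2*k)) (factorial_cast_ne (2*k+1-r))
    (factorial_cast_ne (r-1)) f1 f2

theorem main (r n : ℕ) (hr : 2 ≤ r) (hn : r ≤ n)
    (B : ℕ → ℂ → ℂ)
    (hB : ∀ x : ℂ,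
      (PowerSeries.exp ℂ - 1) ^ r *
          PowerSeries.mk (fun m => B m x / (m.factorial : ℂ)) =
        PowerSeries.X ^ r * PowerSeries.rescale x (PowerSeries.exp ℂ))
    (x : ℂ) :
    B n x =
      -2 * (∑ k ∈ (Finset.range (n / 2 + 1)).filter (fun k => 2 * k + 1 ≤ r - 1),
          (r : ℂ) ^ ((n : ℤ) - 2 * (k : ℤ) - 1) *
            (stir r (r - 2 * k - 1) /
              ((2 * (k : ℂ) + 1) * ((r - 1).choose (2 * k + 1) : ℂ))) *
            (n.choose (2 * k) : ℂ) * (Bc (n - 2 * k)).eval (x / (r : ℂ)))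
      - 2 * (∑ k ∈ (Finset.range (n / 2 + 1)).filter (fun k => r ≤ 2 * k + 1),
          (r : ℂ) ^ ((n : ℤ) - 2 * (k : ℤ) - 1) * ((2 * k).choose (r - 1) : ℂ) *
            (∑ j ∈ Finset.Icc 1 r, (-1 : ℂ) ^ (j - 1) * stir r j *
              (Bnum (2 * k + 1 - r + j) / ((2 * k + 1 - r + j : ℕ) : ℂ))) *
            (n.choose (2 * k) : ℂ) * (Bc (n - 2 * k)).eval (x / (r : ℂ))) := by
  have hrne : ((r:ℕ):ℂ) ≠ 0 := by
    have : r ≠ 0 := by omega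
    exact_mod_cast this
  -- Step A : identify the generating function
  have hABx : PowerSeries.mk (fun m => B m x / (m.factorial : ℂ))
      = W^r * rescale x (exp ℂ) := by
    apply mul_left_cancel₀ (pow_ne_zero r expm1_ne)
    rw [hB x, ← mul_assoc, ← mul_pow, mul_comm (exp ℂ - 1) W, W_mul]
  have hBnx : B n x = ((n.factorial : ℕ) : ℂ) * coeff n (W^r * rescale x (exp ℂ)) := by
    have h := congrArg (coeff n) hABx
    rw [coeff_mk] at h
    rw [← h, mul_comm, div_mul_cancel₀ _ (factorial_cast_ne n)]
  -- Step B : factor the generating function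
  have h1 : PowerSeries.C (((r:ℕ):ℂ))⁻¹ * PowerSeries.C ((r:ℕ):ℂ) = 1 := by
    rw [← map_mul, inv_mul_cancel₀ hrne, map_one]
  have hfacto : W ^ r * rescale x (exp ℂ)
      = (PowerSeries.C (((r:ℕ):ℂ))⁻¹ * (D r * W^r))
          * (rescale ((r:ℕ):ℂ) (W * rescale (x / (r:ℂ)) (exp ℂ))) := by
    rw [map_mul (rescale ((r:ℕ):ℂ)), rescale_rescale, div_mul_cancel₀ x hrne]
    calc W ^ r * rescale x (exp ℂ)
        = (PowerSeries.C (((r:ℕ):ℂ))⁻¹ * PowerSeries.C ((r:ℕ):ℂ))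
            * (W^r * rescale x (exp ℂ)) := by rw [h1, one_mul]
      _ = _ := by rw [← hDW r]; ring
  -- coefficients of the right factor
  have hwy : W * rescale (x/(r:ℂ)) (exp ℂ)
      = PowerSeries.mk (fun b => Polynomial.eval (x/(r:ℂ)) (Bc b) / ((b.factorial : ℕ) : ℂ)) := by
    have hmk : PowerSeries.mk (fun b => Polynomial.eval (x/(r:ℂ)) (Bc b) / ((b.factorial : ℕ) : ℂ))
        = PowerSeries.mk (fun b =>
            Polynomial.aeval (x/(r:ℂ)) ((1 / (b.factorial : ℚ)) • Polynomial.bernoulli b)) := by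
      ext b
      rw [coeff_mk, coeff_mk, Polynomial.smul_eq_C_mul, map_mul, Polynomial.aeval_C,
        Polynomial.aeval_def, Polynomial.eval₂_eq_eval_map, map_div₀, map_one, map_natCast]
      unfold Bc
      ring
    apply mul_right_cancel₀ expm1_ne
    rw [mul_right_comm, W_mul, hmk, Polynomial.bernoulli_generating_function (x/(r:ℂ))]
  have hcoefHs : ∀ b:ℕ, coeff b (rescale ((r:ℕ):ℂ) (W * rescale (x/(r:ℂ)) (exp ℂ)))
      = ((r:ℕ):ℂ)^b * (Polynomial.eval (x/(r:ℂ)) (Bc b) / ((b.factorial : ℕ) : ℂ)) := by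
    intro b
    rw [coeff_rescale, hwy, coeff_mk]
  -- Step C : expand the coefficient as a sum
  have expand : coeff n (W^r * rescale x (exp ℂ))
      = ∑ a ∈ range (n+1), (((r:ℕ):ℂ))⁻¹ * (((-1:ℂ)^(a+1) - 1) * coeff (a+1) (W^r))
          * (((r:ℕ):ℂ)^(n-a) * (Polynomial.eval (x/(r:ℂ)) (Bc (n-a)) / (((n-a).factorial : ℕ) : ℂ))) := by
    rw [hfacto, PowerSeries.coeff_mul, Finset.Nat.sum_antidiagonal_eq_sum_range_succ_mk]
    refine Finset.sum_congr rfl fun a _ => ?_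
    rw [coeff_C_mul, coeff_D_mul, hcoefHs]
  -- Step D : restrict to even indices
  have evens : ∑ a ∈ range (n+1), (((r:ℕ):ℂ))⁻¹ * (((-1:ℂ)^(a+1) - 1) * coeff (a+1) (W^r))
          * (((r:ℕ):ℂ)^(n-a) * (Polynomial.eval (x/(r:ℂ)) (Bc (n-a)) / (((n-a).factorial : ℕ) : ℂ)))
      = ∑ k ∈ range (n/2+1), (((r:ℕ):ℂ))⁻¹ * (((-1:ℂ)^(2*k+1) - 1) * coeff (2*k+1) (W^r))
          * (((r:ℕ):ℂ)^(n-2*k) * (Polynomial.eval (x/(r:ℂ)) (Bc (n-2*k)) / (((n-2*k).factorial : ℕ) : ℂ))) := by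
    rw [← Finset.sum_filter_of_ne (p := fun a => Even a)]
    · refine Finset.sum_nbij' (fun a => a / 2) (fun k => 2 * k) ?_ ?_ ?_ ?_ ?_
      · intro a ha
        rw [Finset.mem_filter, Finset.mem_range] at ha
        rw [Finset.mem_range]
        omega
      · intro k hk
        rw [Finset.mem_range] at hk
        rw [Finset.mem_filter, Finset.mem_range]
        exact ⟨by omega, ⟨k, by ring⟩⟩
      · intro a ha
        rw [Finset.mem_filter, Nat.even_iff] at ha
        omega
      · intro k _
        omega
      · intro a ha
        rw [Finset.mem_filter, Nat.even_iff] at ha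
        rw [show 2 * (a / 2) = a from by omega]
    · intro a _ hne
      by_contra hodd
      apply hne
      have : (-1:ℂ)^(a+1) = 1 := by
        rcases Nat.odd_iff.mp (Nat.not_even_iff_odd.mp hodd) with h
        have ⟨m, hm⟩ := Nat.not_even_iff_odd.mp hodd
        rw [hm, show 2*m+1+1 = 2*(m+1) from by ring, pow_mul]
        norm_num
      rw [this]
      ring
  rw [hBnx, expand, evens, Finset.mul_sum]
  have hfilter2 : (Finset.range (n/2+1)).filter (fun k => r ≤ 2*k+1)
      = (Finset.range (n/2+1)).filter (fun k => ¬(2*k+1 ≤ r-1)) := by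
    apply Finset.filter_congr
    intro k _
    constructor
    · intro h _
      omega
    · intro h
      omega
  rw [hfilter2]
  rw [← Finset.sum_filter_add_sum_filter_not (Finset.range (n/2+1)) (fun k => 2*k+1 ≤ r-1)]
  have hPa : ∀ k ∈ (Finset.range (n/2+1)).filter (fun k => 2*k+1 ≤ r-1),
      ((n.factorial:ℕ):ℂ) * ((((r:ℕ):ℂ))⁻¹ * (((-1:ℂ)^(2*k+1) - 1) * coeff (2*k+1) (W^r))
          * (((r:ℕ):ℂ)^(n-2*k) * (Polynomial.eval (x/(r:ℂ)) (Bc (n-2*k)) / (((n-2*k).factorial:ℕ):ℂ))))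
      = -2 * ((r : ℂ) ^ ((n : ℤ) - 2 * (k : ℤ) - 1) *
            (stir r (r - 2 * k - 1) /
              ((2 * (k : ℂ) + 1) * ((r - 1).choose (2 * k + 1) : ℂ))) *
            (n.choose (2 * k) : ℂ) * (Bc (n - 2 * k)).eval (x / (r : ℂ))) := by
    intro k hk
    rw [Finset.mem_filter, Finset.mem_range] at hk
    exact term_even_low r n k hr (by omega) hk.2 x
  have hQa : ∀ k ∈ (Finset.range (n/2+1)).filter (fun k => ¬(2*k+1 ≤ r-1)),
      ((n.factorial:ℕ):ℂ) * ((((r:ℕ):ℂ))⁻¹ * (((-1:ℂ)^(2*k+1) - 1) * coeff (2*k+1) (W^r))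
          * (((r:ℕ):ℂ)^(n-2*k) * (Polynomial.eval (x/(r:ℂ)) (Bc (n-2*k)) / (((n-2*k).factorial:ℕ):ℂ))))
      = -2 * ((r : ℂ) ^ ((n : ℤ) - 2 * (k : ℤ) - 1) * ((2 * k).choose (r - 1) : ℂ) *
            (∑ j ∈ Finset.Icc 1 r, (-1 : ℂ) ^ (j - 1) * stir r j *
              (Bnum (2 * k + 1 - r + j) / ((2 * k + 1 - r + j : ℕ) : ℂ))) *
            (n.choose (2 * k) : ℂ) * (Bc (n - 2 * k)).eval (x / (r : ℂ))) := by
    intro k hk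
    rw [Finset.mem_filter, Finset.mem_range] at hk
    exact term_even_high r n k hr (by omega) (by omega) x
  rw [Finset.sum_congr rfl hPa, Finset.sum_congr rfl hQa, ← Finset.mul_sum, ← Finset.mul_sum]
  ring



end Thm33

/-- **Theorem 3.3.** For `n ≥ r ≥ 2`, the Bernoulli polynomial of order `r` (defined by
`(eᵗ - 1)ʳ Σₙ Bₙ⁽ʳ⁾(x) tⁿ/n! = tʳ e^{xt}`) satisfies the explicit expansion in terms of
Stirling numbers of the first kind, Bernoulli numbers and ordinary Bernoulli polynomials. -/
theorem bernoulli_order_r_stirling_expansion (r n : ℕ) (hr : 2 ≤ r) (hn : r ≤ n)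
    (B : ℕ → ℂ → ℂ)
    (hB : ∀ x : ℂ,
      (PowerSeries.exp ℂ - 1) ^ r *
          PowerSeries.mk (fun m => B m x / (m.factorial : ℂ)) =
        PowerSeries.X ^ r * PowerSeries.rescale x (PowerSeries.exp ℂ))
    (x : ℂ) :
    B n x =
      -2 * (∑ k ∈ (Finset.range (n / 2 + 1)).filter (fun k => 2 * k + 1 ≤ r - 1),
          (r : ℂ) ^ ((n : ℤ) - 2 * (k : ℤ) - 1) *
            (stir r (r - 2 * k - 1) /
              ((2 * (k : ℂ) + 1) * ((r - 1).choose (2 * k + 1) : ℂ))) *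
            (n.choose (2 * k) : ℂ) * (Bc (n - 2 * k)).eval (x / (r : ℂ)))
      - 2 * (∑ k ∈ (Finset.range (n / 2 + 1)).filter (fun k => r ≤ 2 * k + 1),
          (r : ℂ) ^ ((n : ℤ) - 2 * (k : ℤ) - 1) * ((2 * k).choose (r - 1) : ℂ) *
            (∑ j ∈ Finset.Icc 1 r, (-1 : ℂ) ^ (j - 1) * stir r j *
              (Bnum (2 * k + 1 - r + j) / ((2 * k + 1 - r + j : ℕ) : ℂ))) *
            (n.choose (2 * k) : ℂ) * (Bc (n - 2 * k)).eval (x / (r : ℂ))) :=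
  Thm33.main r n hr hn B hB x
end

section
/- The Bernoulli numbers of order 2 satisfy B₁⁽²⁾ = −1, and for every integer k ≥ 1, B_{2k+1}⁽²⁾ = −(2k+1)·B_{2k}, where B_{2k} is the 2k-th Bernoulli number. -/
lemma Bnum_odd_eq_zero {m : ℕ} (hodd : Odd m) (hm : m ≠ 1) : Bnum m = 0 := by
  have h1 : 1 < m := by
    rcases hodd with ⟨j, rfl⟩
    omega
  rw [Bnum, bernoulli_eq_bernoulli'_of_ne_one hm, bernoulli'_eq_zero_of_odd hodd h1, map_zero]

lemma coeff_bernoulliPS (n : ℕ) :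
    PowerSeries.coeff n (bernoulliPowerSeries ℂ) = Bnum n / (n.factorial : ℂ) := by
  rw [bernoulliPowerSeries, PowerSeries.coeff_mk, map_div₀, Bnum]
  norm_num

/-- **Bernoulli numbers of order 2.** If `(Bₙ⁽²⁾)` are the Bernoulli numbers of order `2`,
defined by `(eᵗ - 1)² Σₙ Bₙ⁽²⁾ tⁿ/n! = t²`, then `B₁⁽²⁾ = -1` and, for `k ≥ 1`,
`B_{2k+1}⁽²⁾ = -(2k+1) B_{2k}`. -/
theorem bernoulli_order_two_odd (B : ℕ → ℂ)
    (hB : (PowerSeries.exp ℂ - 1) ^ 2 *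
        PowerSeries.mk (fun n => B n / (n.factorial : ℂ)) = PowerSeries.X ^ 2) :
    B 1 = -1 ∧ ∀ k : ℕ, 1 ≤ k → B (2 * k + 1) = -(2 * (k : ℂ) + 1) * Bnum (2 * k) := by
  have hexp : (PowerSeries.exp ℂ - 1) ≠ 0 := by
    intro h
    have := congrArg (PowerSeries.coeff 1) h
    simp [PowerSeries.coeff_exp] at this
  have hF : PowerSeries.mk (fun n => B n / (n.factorial : ℂ)) = (bernoulliPowerSeries ℂ) ^ 2 := by
    apply mul_left_cancel₀ (pow_ne_zero 2 hexp)
    rw [hB, ← mul_pow, mul_comm (PowerSeries.exp ℂ - 1),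
      bernoulliPowerSeries_mul_exp_sub_one ℂ]
  have key : ∀ n : ℕ, B n / (n.factorial : ℂ) =
      ∑ i ∈ Finset.range (n + 1),
        (Bnum i / (i.factorial : ℂ)) * (Bnum (n - i) / ((n - i).factorial : ℂ)) := by
    intro n
    have := congrArg (PowerSeries.coeff n) hF
    rw [PowerSeries.coeff_mk, sq, PowerSeries.coeff_mul,
      Finset.Nat.sum_antidiagonal_eq_sum_range_succ_mk] at this
    simpa [coeff_bernoulliPS] using this
  constructor
  · have h1 := key 1
    have : B 1 / 1 = Bnum 0 / 1 * (Bnum 1 / 1) + Bnum 1 / 1 * (Bnum 0 / 1) := by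
      simpa [Finset.sum_range_succ] using h1
    simp only [Bnum, bernoulli_zero, bernoulli_one, map_one, map_div₀, map_neg,
      map_ofNat, div_one, one_mul, mul_one] at this
    rw [this]
    norm_num
  · intro k hk
    set n := 2 * k + 1 with hn
    have hsum : ∑ i ∈ Finset.range (n + 1),
        (Bnum i / (i.factorial : ℂ)) * (Bnum (n - i) / ((n - i).factorial : ℂ)) =
        ∑ i ∈ ({1, 2 * k} : Finset ℕ),
        (Bnum i / (i.factorial : ℂ)) * (Bnum (n - i) / ((n - i).factorial : ℂ)) := by
      refine (Finset.sum_subset ?_ ?_).symm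
      · intro i hi
        simp only [Finset.mem_insert, Finset.mem_singleton] at hi
        rcases hi with rfl | rfl <;> simp [hn] <;> omega
      · intro i hi hni
        simp only [Finset.mem_insert, Finset.mem_singleton, not_or] at hni
        simp only [Finset.mem_range] at hi
        rcases Nat.even_or_odd i with he | ho
        · have hodd : Odd (n - i) := by
            rcases he with ⟨j, rfl⟩
            have : j + j ≤ 2 * k := by omega
            refine ⟨k - j, by omega⟩
          have : Bnum (n - i) = 0 := Bnum_odd_eq_zero hodd (by omega)
          simp [this]
        · have : Bnum i = 0 := Bnum_odd_eq_zero ho hni.1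
          simp [this]
    have hne : (1 : ℕ) ≠ 2 * k := by omega
    have hpair : ∑ i ∈ ({1, 2 * k} : Finset ℕ),
        (Bnum i / (i.factorial : ℂ)) * (Bnum (n - i) / ((n - i).factorial : ℂ)) =
        -(Bnum (2 * k) / ((2 * k).factorial : ℂ)) := by
      rw [Finset.sum_pair hne]
      have h1 : n - 1 = 2 * k := by omega
      have h2 : n - 2 * k = 1 := by omega
      rw [h1, h2]
      simp only [Bnum, bernoulli_one, Nat.factorial_one, Nat.cast_one, div_one]
      rw [map_div₀, map_neg, map_one, map_ofNat]
      ring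
    have hfac : ((2 * k).factorial : ℂ) ≠ 0 := by
      exact_mod_cast Nat.cast_ne_zero.mpr (2 * k).factorial_ne_zero
    have hB' := key n
    rw [hsum, hpair] at hB'
    have hnfac : (n.factorial : ℂ) = (n : ℂ) * ((2 * k).factorial : ℂ) := by
      rw [hn, Nat.factorial_succ]
      push_cast
      ring
    have hnfac0 : (n.factorial : ℂ) ≠ 0 := by
      exact_mod_cast Nat.cast_ne_zero.mpr n.factorial_ne_zero
    field_simp at hB'
    have hBn : B n = -(Bnum (2 * k) * (n.factorial : ℂ)) / ((2 * k).factorial : ℂ) := by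
      rw [eq_div_iff hfac]; linear_combination hB'
    have hcast : ((n : ℕ) : ℂ) = 2 * (k : ℂ) + 1 := by push_cast [hn]; ring
    rw [hBn, hnfac, hcast]
    field_simp
end

section
/- For every n ∈ ℕ and every x ∈ ℂ, the Bernoulli polynomial of order 2 satisfies Bₙ⁽²⁾(x) = Σ_{k=0}^{⌊n/2⌋} 2^{n−2k}·C(n,2k)·B_{2k}·B_{n−2k}(x/2), where B_{2k} is the 2k-th Bernoulli number and C(n,2k) is the binomial coefficient. -/
open PowerSeries Finset

lemma two_mul_C_half : (2 : ℂ⟦X⟧) * PowerSeries.C (R := ℂ) 2⁻¹ = 1 := by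
  have h : (2 : ℂ⟦X⟧) = PowerSeries.C (R := ℂ) 2 := by
    simp [map_ofNat]
  rw [h, ← map_mul]
  norm_num

/-- The "even part" Bernoulli number series. -/
noncomputable def Eser : ℂ⟦X⟧ :=
  bernoulliPowerSeries ℂ + PowerSeries.C (R := ℂ) 2⁻¹ * PowerSeries.X

lemma coeff_Eser (n : ℕ) :
    PowerSeries.coeff (R := ℂ) n Eser =
      if Even n then Bnum n / (n.factorial : ℂ) else 0 := by
  rw [Eser, map_add, bernoulliPowerSeries, coeff_mk]
  rcases n with _ | _ | n
  · simp [Bnum]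
  · have : ¬ Even 1 := by decide
    simp [this, Bnum, PowerSeries.coeff_C_mul, bernoulli_one]
    norm_num
  · have hX : (PowerSeries.coeff (R := ℂ) (n + 2)) (PowerSeries.C (R := ℂ) 2⁻¹ * PowerSeries.X) = 0 := by
      simp [PowerSeries.coeff_C_mul, PowerSeries.coeff_X]
    rw [hX, add_zero]
    by_cases h : Even (n + 2)
    · simp only [h, if_true, Bnum]
      rw [map_div₀, map_natCast]
    · have hodd : bernoulli (n + 2) = 0 := by
        rw [bernoulli_eq_bernoulli'_of_ne_one (by omega)]
        exact bernoulli'_eq_zero_of_odd (Nat.odd_iff.mpr (by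
          rcases Nat.even_or_odd (n + 2) with he | ho
          · exact absurd he h
          · exact Nat.odd_iff.mp ho)) (by omega)
      simp [h, hodd]

lemma exp_sub_one_mul_Eser :
    (PowerSeries.exp ℂ - 1) * Eser =
      PowerSeries.C (R := ℂ) 2⁻¹ * (PowerSeries.X * (PowerSeries.exp ℂ + 1)) := by
  have hb := bernoulliPowerSeries_mul_exp_sub_one ℂ
  have hC := two_mul_C_half
  rw [Eser]
  linear_combination hb - PowerSeries.X * hC

/-- **Bernoulli polynomials of order 2.** If `(Bₙ⁽²⁾(x))` are the Bernoulli polynomials of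
order `2`, defined by `(eᵗ - 1)² Σₙ Bₙ⁽²⁾(x) tⁿ/n! = t² e^{xt}`, then
`Bₙ⁽²⁾(x) = Σ_{2k ≤ n} 2^{n-2k} C(n,2k) B_{2k} B_{n-2k}(x/2)`. -/
theorem bernoulli_order_two_expansion (B : ℕ → ℂ → ℂ)
    (hB : ∀ x : ℂ,
      (PowerSeries.exp ℂ - 1) ^ 2 *
          PowerSeries.mk (fun n => B n x / (n.factorial : ℂ)) =
        PowerSeries.X ^ 2 * PowerSeries.rescale x (PowerSeries.exp ℂ)) :
    ∀ (n : ℕ) (x : ℂ), B n x =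
      ∑ k ∈ Finset.range (n / 2 + 1),
        (2 : ℂ) ^ (n - 2 * k) * (n.choose (2 * k) : ℂ) * Bnum (2 * k) *
          (Bc (n - 2 * k)).eval (x / 2) := by
  intro n x
  set G : ℂ⟦X⟧ := PowerSeries.mk fun m => (Bc m).eval (x / 2) / (m.factorial : ℂ) with hGdef
  have hGeq : (PowerSeries.mk fun m =>
      Polynomial.aeval (x / 2) ((1 / (m.factorial : ℚ)) • Polynomial.bernoulli m)) = G := by
    ext m
    rw [hGdef, coeff_mk, coeff_mk, map_smul, Algebra.smul_def, map_div₀, map_one,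
      map_natCast, Bc, Polynomial.eval_map, ← Polynomial.aeval_def]
    ring
  have hG : (PowerSeries.exp ℂ - 1) * G = PowerSeries.X * rescale (x / 2) (PowerSeries.exp ℂ) := by
    rw [← hGeq, mul_comm]
    exact Polynomial.bernoulli_generating_function (x / 2)
  set R : ℂ⟦X⟧ := rescale (2 : ℂ) G with hRdef
  have hR : (PowerSeries.exp ℂ ^ 2 - 1) * R =
      2 * PowerSeries.X * rescale x (PowerSeries.exp ℂ) := by
    have h2 := congrArg (rescale (2 : ℂ)) hG
    rw [map_mul, map_sub, map_one, map_mul, rescale_X, rescale_rescale,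
      div_mul_cancel₀ x (two_ne_zero)] at h2
    have hexp2 : rescale (2 : ℂ) (PowerSeries.exp ℂ) = PowerSeries.exp ℂ ^ 2 := by
      rw [exp_pow_eq_rescale_exp]; norm_num
    have hC2 : PowerSeries.C (R := ℂ) 2 = (2 : ℂ⟦X⟧) := by simp [map_ofNat]
    rw [hexp2, hC2] at h2
    exact h2
  have key : PowerSeries.mk (fun m => B m x / (m.factorial : ℂ)) = Eser * R := by
    have hne : (PowerSeries.exp ℂ - 1) ^ 2 ≠ 0 := by
      apply pow_ne_zero
      intro h
      have := congrArg (PowerSeries.coeff (R := ℂ) 1) h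
      simp [coeff_exp] at this
    apply mul_left_cancel₀ hne
    rw [hB x]
    have hE := exp_sub_one_mul_Eser
    have hC := two_mul_C_half
    linear_combination (-(PowerSeries.exp ℂ - 1) * R) * hE - PowerSeries.C (R := ℂ) 2⁻¹ *
      PowerSeries.X * hR - PowerSeries.X ^ 2 * rescale x (PowerSeries.exp ℂ) * hC
  have hcoeff := congrArg (PowerSeries.coeff (R := ℂ) n) key
  rw [coeff_mk, PowerSeries.coeff_mul, Finset.Nat.sum_antidiagonal_eq_sum_range_succ_mk] at hcoeff
  simp only [coeff_Eser, hRdef, hGdef, rescale_mk, coeff_mk] at hcoeff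
  have hsum : (∑ i ∈ range (n + 1),
        (if Even i then Bnum i / (i.factorial : ℂ) else 0) *
          ((2 : ℂ) ^ (n - i) * ((Bc (n - i)).eval (x / 2) / ((n - i).factorial : ℂ)))) =
      ∑ k ∈ range (n / 2 + 1),
        (Bnum (2 * k) / ((2 * k).factorial : ℂ)) *
          ((2 : ℂ) ^ (n - 2 * k) * ((Bc (n - 2 * k)).eval (x / 2) /
            ((n - 2 * k).factorial : ℂ))) := by
    rw [← Finset.sum_filter_of_ne (p := fun i => Even i) (fun i _ hi => by
      by_contra h
      exact hi (by simp [h]))]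
    refine Finset.sum_nbij' (fun i => i / 2) (fun k => 2 * k) ?_ ?_ ?_ ?_ ?_
    · intro a ha
      simp only [mem_filter, mem_range] at ha
      simp only [mem_range]
      omega
    · intro k hk
      simp only [mem_range] at hk
      simp only [mem_filter, mem_range]
      exact ⟨by omega, even_two_mul k⟩
    · intro a ha
      simp only [mem_filter, mem_range] at ha
      obtain ⟨-, c, hc⟩ := ha
      show 2 * (a / 2) = a
      omega
    · intro k hk
      show 2 * k / 2 = k
      omega
    · intro a ha
      simp only [mem_filter, mem_range] at ha
      obtain ⟨-, ha2⟩ := ha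
      rw [if_pos ha2]
      have : 2 * (a / 2) = a := by
        obtain ⟨c, hc⟩ := ha2
        omega
      rw [this]
  rw [hsum] at hcoeff
  have hfact : ((n.factorial : ℂ)) ≠ 0 := Nat.cast_ne_zero.mpr n.factorial_ne_zero
  rw [div_eq_iff hfact] at hcoeff
  rw [hcoeff, Finset.sum_mul]
  refine Finset.sum_congr rfl fun k hk => ?_
  have hkn : 2 * k ≤ n := by
    have := Finset.mem_range.mp hk
    omega
  rw [Nat.cast_choose ℂ hkn]
  have h1 : (((2 * k).factorial : ℂ)) ≠ 0 := Nat.cast_ne_zero.mpr (Nat.factorial_ne_zero _)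
  have h2 : (((n - 2 * k).factorial : ℂ)) ≠ 0 := Nat.cast_ne_zero.mpr (Nat.factorial_ne_zero _)
  field_simp
end

section
/- For every integer n ≥ 4 and every x ∈ ℂ, the Bernoulli polynomial of order 3 satisfies Bₙ⁽³⁾(x) = 3ⁿ·Bₙ(x/3) + (1/2)·3^{n−2}·C(n,2)·B_{n−2}(x/3) − Σ_{k=2}^{⌊n/2⌋} 3^{n−2k}·(2k−1)·C(n,2k)·B_{2k}·B_{n−2k}(x/3), where B_{2k} is the 2k-th Bernoulli number and C(n,2k) is the binomial coefficient. -/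
open PowerSeries

private lemma aux_DE : d⁄dX ℂ (exp ℂ) = exp ℂ := by
  ext n
  rw [coeff_derivative, coeff_exp, coeff_exp, Nat.factorial_succ]
  have h1 : ((n:ℂ) + 1) ≠ 0 := by norm_cast
  have h2 : ((n.factorial : ℂ)) ≠ 0 := Nat.cast_ne_zero.mpr n.factorial_ne_zero
  push_cast
  field_simp

private lemma aux_key (y : ℂ) :
    (exp ℂ - 1)^3 * ((rescale (3:ℂ) (PowerSeries.mk fun n =>
        Polynomial.aeval y ((1 / n.factorial : ℚ) • Polynomial.bernoulli n))) *
      (PowerSeries.C (R := ℂ) (1/3) * X^2 -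
        (X * d⁄dX ℂ (bernoulliPowerSeries ℂ) - bernoulliPowerSeries ℂ))) =
    X^3 * rescale (3*y) (exp ℂ) := by
  set E := exp ℂ with hEdef
  set F := bernoulliPowerSeries ℂ with hFdef
  set P : ℂ⟦X⟧ := PowerSeries.mk fun n =>
    Polynomial.aeval y ((1 / n.factorial : ℚ) • Polynomial.bernoulli n) with hPdef
  have hF : F * (E - 1) = X := bernoulliPowerSeries_mul_exp_sub_one ℂ
  have hP : P * (E - 1) = X * rescale y E := Polynomial.bernoulli_generating_function y
  have hb : (d⁄dX ℂ F) * (E - 1) + F * E = 1 := by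
    have h := congrArg (d⁄dX ℂ) hF
    rw [Derivation.leibniz, map_sub, aux_DE, Derivation.map_one_eq_zero, derivative_X] at h
    rw [smul_eq_mul, smul_eq_mul] at h
    linear_combination h
  have hG : (X * d⁄dX ℂ F - F) * (E - 1)^2 = -(E * X^2) := by
    linear_combination (X*(E-1)) * hb + (-(E-1) - X*E) * hF
  have hg : (rescale (3:ℂ) P) * (E^3 - 1) = 3 * X * rescale (3*y) E := by
    have h1 := congrArg (rescale (3:ℂ)) hP
    rw [map_mul, map_sub, map_one, map_mul, rescale_X, rescale_rescale] at h1
    rw [show (E:ℂ⟦X⟧)^3 = rescale (3:ℂ) E from by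
      have := exp_pow_eq_rescale_exp (A := ℂ) 3; norm_num at this; exact this]
    rw [h1, show (PowerSeries.C (R := ℂ)) 3 = 3 from map_ofNat _ 3, mul_comm y 3]
  have hC : (3:ℂ⟦X⟧) * (PowerSeries.C (R := ℂ)) (1/3) = 1 := by
    rw [show (3:ℂ⟦X⟧) = PowerSeries.C (R := ℂ) 3 from (map_ofNat _ 3).symm, ← map_mul]
    norm_num
  set g := rescale (3:ℂ) P with hgdef
  set c := PowerSeries.C (R := ℂ) (1/3) with hcdef
  set R := rescale (3*y) E with hRdef
  linear_combination (-(g*(E-1))) * hG + (c * X^2) * hg + (X^3*R - g*E*X^2*(E-1)) * hC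

private lemma aux_coeffQ (k : ℕ) :
    coeff (R := ℂ) k (PowerSeries.C (R := ℂ) (1/3) * X^2 -
        (X * d⁄dX ℂ (bernoulliPowerSeries ℂ) - bernoulliPowerSeries ℂ)) =
    (if k = 2 then (1/3:ℂ) else 0) - ((k:ℂ) - 1) * Bnum k / k.factorial := by
  have hF : ∀ m : ℕ, coeff (R := ℂ) m (bernoulliPowerSeries ℂ) = Bnum m / m.factorial := by
    intro m
    rw [bernoulliPowerSeries, coeff_mk, map_div₀, map_natCast, Bnum]
  rw [map_sub, map_sub, coeff_C_mul, coeff_X_pow]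
  cases k with
  | zero =>
    have h0 : coeff (R := ℂ) 0 (X * d⁄dX ℂ (bernoulliPowerSeries ℂ)) = 0 := by simp
    rw [h0, hF]
    norm_num
  | succ m =>
    rw [coeff_succ_X_mul, coeff_derivative, hF]
    have h2 : ((m.factorial : ℂ)) ≠ 0 := Nat.cast_ne_zero.mpr m.factorial_ne_zero
    split_ifs <;> push_cast <;> ring

private lemma aux_coeffg (y : ℂ) (m : ℕ) :
    coeff (R := ℂ) m (rescale (3:ℂ) (PowerSeries.mk fun n =>
        Polynomial.aeval y ((1 / n.factorial : ℚ) • Polynomial.bernoulli n))) =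
    3^m * (Bc m).eval y / m.factorial := by
  rw [coeff_rescale, coeff_mk, map_smul, Algebra.smul_def, map_div₀, map_one, map_natCast]
  rw [Bc, Polynomial.eval_map, ← Polynomial.aeval_def]
  ring

private lemma Bnum_odd_zero {k : ℕ} (h1 : ¬ Even k) (h3 : 3 ≤ k) : Bnum k = 0 := by
  rw [Bnum, bernoulli_eq_bernoulli'_of_ne_one (by omega),
    bernoulli'_eq_zero_of_odd (Nat.odd_iff.mpr (Nat.not_even_iff.mp h1)) (by omega)]
  simp

/-- **Bernoulli polynomials of order 3.** If `(Bₙ⁽³⁾(x))` are the Bernoulli polynomials of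
order `3`, defined by `(eᵗ - 1)³ Σₙ Bₙ⁽³⁾(x) tⁿ/n! = t³ e^{xt}`, then for `n ≥ 4`,
`Bₙ⁽³⁾(x) = 3ⁿ Bₙ(x/3) + (1/2) 3^{n-2} C(n,2) B_{n-2}(x/3)
  - Σ_{k=2}^{⌊n/2⌋} 3^{n-2k} (2k-1) C(n,2k) B_{2k} B_{n-2k}(x/3)`. -/
theorem bernoulli_order_three_expansion (B : ℕ → ℂ → ℂ)
    (hB : ∀ x : ℂ,
      (PowerSeries.exp ℂ - 1) ^ 3 *
          PowerSeries.mk (fun n => B n x / (n.factorial : ℂ)) =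
        PowerSeries.X ^ 3 * PowerSeries.rescale x (PowerSeries.exp ℂ))
    (n : ℕ) (hn : 4 ≤ n) (x : ℂ) :
    B n x =
      (3 : ℂ) ^ n * (Bc n).eval (x / 3) +
        (1 / 2 : ℂ) * (3 : ℂ) ^ (n - 2) * (n.choose 2 : ℂ) * (Bc (n - 2)).eval (x / 3) -
        ∑ k ∈ Finset.Icc 2 (n / 2),
          (3 : ℂ) ^ (n - 2 * k) * (2 * (k : ℂ) - 1) * (n.choose (2 * k) : ℂ) *
            Bnum (2 * k) * (Bc (n - 2 * k)).eval (x / 3) := by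
  classical
  have hx3 : (3:ℂ) * (x/3) = x := by ring
  set Q : ℂ⟦X⟧ := PowerSeries.C (R := ℂ) (1/3) * X^2 -
      (X * d⁄dX ℂ (bernoulliPowerSeries ℂ) - bernoulliPowerSeries ℂ) with hQdef
  set g : ℂ⟦X⟧ := rescale (3:ℂ) (PowerSeries.mk fun m =>
      Polynomial.aeval (x/3) ((1 / m.factorial : ℚ) • Polynomial.bernoulli m)) with hgdef
  have hkey : (exp ℂ - 1)^3 * (g * Q) = X^3 * rescale x (exp ℂ) := by
    have h := aux_key (x/3)
    rw [hx3] at h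
    exact h
  have hne : (exp ℂ - 1)^3 ≠ 0 := by
    apply pow_ne_zero
    intro h
    have h1 := congrArg (coeff (R := ℂ) 1) h
    simp [coeff_exp] at h1
  have hSeq : PowerSeries.mk (fun m => B m x / (m.factorial : ℂ)) = g * Q :=
    mul_left_cancel₀ hne (by rw [hB x, hkey])
  have hfacn : ((n.factorial : ℂ)) ≠ 0 := Nat.cast_ne_zero.mpr n.factorial_ne_zero
  have hBn : B n x = n.factorial * coeff (R := ℂ) n (Q * g) := by
    have h := congrArg (coeff (R := ℂ) n) hSeq
    rw [coeff_mk] at h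
    rw [mul_comm Q g, ← h]
    field_simp
  rw [PowerSeries.coeff_mul, Finset.Nat.sum_antidiagonal_eq_sum_range_succ_mk,
    Finset.mul_sum] at hBn
  set w : ℕ → ℂ := fun k => (n.choose k : ℂ) *
      ((if k = 2 then (1/3:ℂ) else 0) * (k.factorial:ℂ) - ((k:ℂ)-1) * Bnum k) *
      (3^(n-k) * (Bc (n-k)).eval (x/3)) with hwdef
  have hw : ∀ k ∈ Finset.range (n+1),
      (n.factorial : ℂ) * (coeff (R := ℂ) k Q * coeff (R := ℂ) (n-k) g) = w k := by
    intro k hk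
    have hkn : k ≤ n := Nat.lt_succ_iff.mp (Finset.mem_range.mp hk)
    rw [hQdef, hgdef, aux_coeffQ, aux_coeffg, hwdef]
    have hcmf : (n.factorial : ℂ) = (n.choose k : ℂ) * k.factorial * (n-k).factorial := by
      exact_mod_cast (Nat.choose_mul_factorial_mul_factorial hkn).symm
    have hf1 : ((k.factorial:ℂ)) ≠ 0 := Nat.cast_ne_zero.mpr k.factorial_ne_zero
    have hf2 : (((n-k).factorial:ℂ)) ≠ 0 := Nat.cast_ne_zero.mpr (n-k).factorial_ne_zero
    rw [hcmf]
    field_simp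
  rw [Finset.sum_congr rfl hw] at hBn
  -- split off k = 0, 1, 2, 3
  have hsplit : ∑ k ∈ Finset.range (n+1), w k
      = w 0 + (w 1 + (w 2 + (w 3 + ∑ k ∈ Finset.Ico 4 (n+1), w k))) := by
    rw [Finset.range_eq_Ico, Finset.sum_eq_sum_Ico_succ_bot (by omega),
      Finset.sum_eq_sum_Ico_succ_bot (by omega), Finset.sum_eq_sum_Ico_succ_bot (by omega),
      Finset.sum_eq_sum_Ico_succ_bot (by omega)]
  have hIco : ∑ k ∈ Finset.Ico 4 (n+1), w k
      = ∑ j ∈ Finset.Icc 2 (n/2), -((3 : ℂ) ^ (n - 2 * j) * (2 * (j : ℂ) - 1) *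
          (n.choose (2 * j) : ℂ) * Bnum (2 * j) * (Bc (n - 2 * j)).eval (x / 3)) := by
    rw [← Finset.sum_filter_of_ne (p := fun k => Even k)
      (fun k hk hne => by
        by_contra hodd
        apply hne
        have hk4 : 4 ≤ k := (Finset.mem_Ico.mp hk).1
        rw [hwdef]
        simp only []
        rw [Bnum_odd_zero hodd (by omega), if_neg (by omega)]
        ring)]
    refine (Finset.sum_nbij' (fun j => 2*j) (fun k => k/2) ?_ ?_ ?_ ?_ ?_).symm
    · intro j hj
      have := Finset.mem_Icc.mp hj
      simp only [Finset.mem_filter, Finset.mem_Ico]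
      refine ⟨⟨by omega, by omega⟩, even_two_mul j⟩
    · intro k hk
      simp only [Finset.mem_filter, Finset.mem_Ico] at hk
      have he := hk.2
      rw [Nat.even_iff] at he
      show k / 2 ∈ Finset.Icc 2 (n / 2)
      rw [Finset.mem_Icc]
      omega
    · intro j hj
      show 2 * j / 2 = j
      omega
    · intro k hk
      simp only [Finset.mem_filter, Finset.mem_Ico] at hk
      have he := hk.2
      rw [Nat.even_iff] at he
      show 2 * (k / 2) = k
      omega
    · intro j hj
      have hj2 : 2 ≤ j := (Finset.mem_Icc.mp hj).1
      rw [hwdef]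
      simp only []
      rw [if_neg (by omega)]
      push_cast
      ring
  rw [hBn, hsplit, hIco, Finset.sum_neg_distrib]
  have hB0 : Bnum 0 = 1 := by rw [Bnum, bernoulli_zero]; simp
  have hB2 : Bnum 2 = 1/6 := by
    rw [Bnum, bernoulli_eq_bernoulli'_of_ne_one (by norm_num), bernoulli'_two]
    rw [map_div₀, map_one]
    norm_num
  have hB3 : Bnum 3 = 0 := Bnum_odd_zero (by decide) (by omega)
  rw [hwdef]
  simp only [hB0, hB2, hB3, Nat.choose_zero_right, Nat.choose_one_right,
    Nat.factorial, Nat.sub_zero, if_pos rfl, if_neg (by norm_num : (0:ℕ) ≠ 2),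
    if_neg (by norm_num : (1:ℕ) ≠ 2), if_neg (by norm_num : (3:ℕ) ≠ 2)]
  push_cast
  ring
end

section
/- For every integer r ≥ 1, every n ∈ ℕ and every x ∈ ℂ, the Euler polynomial of order r satisfies Eₙ⁽ʳ⁾(x) = Σ_{k=0}^{⌊n/2⌋} r^{n−2k}·C(n,2k)·E_{2k}⁽ʳ⁾·E_{n−2k}(x/r), where E_{2k}⁽ʳ⁾ = E_{2k}⁽ʳ⁾(0) and C(n,2k) is the binomial coefficient. -/
open PowerSeries

noncomputable def Bp (y : ℂ) : PowerSeries ℂ :=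
  PowerSeries.mk fun n => (Bc n).eval y / (n.factorial : ℂ)

noncomputable def Ep (y : ℂ) : PowerSeries ℂ :=
  PowerSeries.mk fun n => (Ec n).eval y / (n.factorial : ℂ)

lemma Bgen (y : ℂ) : Bp y * (exp ℂ - 1) = PowerSeries.X * rescale y (exp ℂ) := by
  have h := Polynomial.bernoulli_generating_function (A := ℂ) y
  convert h using 2
  ext n
  simp only [Bp, coeff_mk, Polynomial.aeval_def, ← Polynomial.eval_map,
    Polynomial.smul_eq_C_mul, Polynomial.map_mul, Polynomial.map_C, Polynomial.eval_mul,
    Polynomial.eval_C]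
  rw [map_div₀, map_one, map_natCast]
  unfold Bc
  ring

lemma Bc_zero : Bc 0 = 1 := by
  unfold Bc; rw [Polynomial.bernoulli_zero, Polynomial.map_one]

lemma XEp (y : ℂ) : PowerSeries.X * Ep y
    = PowerSeries.C (R := ℂ) 2 * (Bp y - rescale 2 (Bp (y / 2))) := by
  ext n
  cases n with
  | zero =>
    simp only [Ep, Bp, ← coeff_zero_eq_constantCoeff, coeff_rescale, coeff_mk, map_mul,
      PowerSeries.coeff_C_mul, map_sub, coeff_zero_X_mul, Bc_zero]
    simp [Bc_zero]
  | succ n =>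
    rw [coeff_succ_X_mul]
    simp only [Ep, Bp, coeff_mk, map_mul, PowerSeries.coeff_C_mul, map_sub, coeff_rescale,
      coeff_mk]
    rw [Ec]
    simp only [Polynomial.eval_mul, Polynomial.eval_C, Polynomial.eval_sub, Polynomial.eval_comp,
      Polynomial.eval_mul, Polynomial.eval_C, Polynomial.eval_X]
    have h1 : ((n : ℂ) + 1) ≠ 0 := Nat.cast_add_one_ne_zero n
    have h2 : ((n + 1).factorial : ℂ) ≠ 0 := Nat.cast_ne_zero.mpr (Nat.factorial_ne_zero (n + 1))
    have h3 : ((n).factorial : ℂ) ≠ 0 := Nat.cast_ne_zero.mpr (Nat.factorial_ne_zero n)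
    have hf : ((n + 1).factorial : ℂ) = ((n : ℂ) + 1) * (n.factorial : ℂ) := by
      rw [Nat.factorial_succ]; push_cast; ring
    have hy : (2 : ℂ)⁻¹ * y = y / 2 := by ring
    rw [hy, hf]
    field_simp

lemma Egen (y : ℂ) : (exp ℂ + 1) * Ep y = PowerSeries.C (R := ℂ) 2 * rescale y (exp ℂ) := by
  have hXe : (PowerSeries.X * (exp ℂ - 1) : PowerSeries ℂ) ≠ 0 :=
    mul_ne_zero PowerSeries.X_ne_zero exp_sub_one_ne
  apply mul_left_cancel₀ hXe
  have hB1 := Bgen y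
  have hB2 := congrArg (rescale (2 : ℂ)) (Bgen (y / 2))
  rw [map_mul, map_mul, map_sub, map_one, rescale_X] at hB2
  rw [rescale_rescale] at hB2
  have hy2 : y / 2 * 2 = y := by field_simp
  rw [hy2] at hB2
  have hexp2 : rescale (2 : ℂ) (exp ℂ) = exp ℂ * exp ℂ := by
    have := PowerSeries.exp_pow_eq_rescale_exp (A := ℂ) 2
    rw [show ((2:ℕ):ℂ) = (2:ℂ) by norm_num] at this
    rw [← this]; ring
  rw [hexp2] at hB2
  have hX := XEp y
  have key : PowerSeries.X * Ep y * ((exp ℂ - 1) * (exp ℂ + 1))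
      = PowerSeries.C (R := ℂ) 2 * ((Bp y * (exp ℂ - 1)) * (exp ℂ + 1)
          - rescale 2 (Bp (y / 2)) * (exp ℂ * exp ℂ - 1)) := by
    rw [hX]; ring
  rw [hB1, hB2] at key
  calc PowerSeries.X * (exp ℂ - 1) * ((exp ℂ + 1) * Ep y)
      = PowerSeries.X * Ep y * ((exp ℂ - 1) * (exp ℂ + 1)) := by ring
    _ = PowerSeries.C (R := ℂ) 2 * ((PowerSeries.X * rescale y (exp ℂ)) * (exp ℂ + 1)
          - PowerSeries.C (R := ℂ) 2 * PowerSeries.X * rescale y (exp ℂ)) := by rw [key]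
    _ = PowerSeries.X * (exp ℂ - 1) * (PowerSeries.C (R := ℂ) 2 * rescale y (exp ℂ)) := by
        have : PowerSeries.C (R := ℂ) 2 = 1 + 1 := by
          rw [← map_one (PowerSeries.C (R := ℂ)), ← map_add]; norm_num
        rw [this]; ring

lemma rescale_C' (a b : ℂ) : rescale a (PowerSeries.C (R := ℂ) b) = PowerSeries.C (R := ℂ) b := by
  ext n
  rw [coeff_rescale]
  simp only [PowerSeries.coeff_C]
  split
  · next h => subst h; simp
  · simp

lemma exp_pow_ne (r : ℕ) : ((exp ℂ + 1) ^ r : PowerSeries ℂ) ≠ 0 := by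
  intro h
  have := congrArg (PowerSeries.constantCoeff (R := ℂ)) h
  simp only [map_pow, map_add, constantCoeff_exp, map_one, map_zero] at this
  norm_num at this

lemma neg_symm (r : ℕ) (f : PowerSeries ℂ)
    (hE0 : (exp ℂ + 1) ^ r * f = PowerSeries.C (R := ℂ) ((2:ℂ)^r)) :
    evalNegHom f = exp ℂ ^ r * f := by
  apply mul_left_cancel₀ (exp_pow_ne r)
  have h2 := congrArg evalNegHom hE0
  rw [map_mul, map_pow, map_add, map_one] at h2
  have hC : evalNegHom (PowerSeries.C (R := ℂ) ((2:ℂ)^r)) = PowerSeries.C (R := ℂ) ((2:ℂ)^r) :=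
    rescale_C' _ _
  rw [hC] at h2
  have hinv : exp ℂ * evalNegHom (exp ℂ) = 1 := exp_mul_exp_neg_eq_one
  have key : (exp ℂ + 1) ^ r = exp ℂ ^ r * (evalNegHom (exp ℂ) + 1) ^ r := by
    rw [← mul_pow, mul_add, hinv, mul_one, add_comm]
  calc (exp ℂ + 1) ^ r * evalNegHom f
      = exp ℂ ^ r * ((evalNegHom (exp ℂ) + 1) ^ r * evalNegHom f) := by rw [key]; ring
    _ = exp ℂ ^ r * PowerSeries.C (R := ℂ) ((2:ℂ)^r) := by rw [h2]
    _ = exp ℂ ^ r * ((exp ℂ + 1) ^ r * f) := by rw [hE0]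
    _ = (exp ℂ + 1) ^ r * (exp ℂ ^ r * f) := by ring

/-- **Higher-order Euler expansion.** If `(Eₙ⁽ʳ⁾(x))` are the Euler polynomials of order
`r ≥ 1`, defined by `(eᵗ + 1)ʳ Σₙ Eₙ⁽ʳ⁾(x) tⁿ/n! = 2ʳ e^{xt}`, then
`Eₙ⁽ʳ⁾(x) = Σ_{2k ≤ n} r^{n-2k} C(n,2k) E_{2k}⁽ʳ⁾ E_{n-2k}(x/r)`. -/
theorem euler_order_r_expansion (r : ℕ) (hr : 1 ≤ r) (E : ℕ → ℂ → ℂ)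
    (hE : ∀ x : ℂ,
      (PowerSeries.exp ℂ + 1) ^ r *
          PowerSeries.mk (fun n => E n x / (n.factorial : ℂ)) =
        PowerSeries.C (R := ℂ) ((2 : ℂ) ^ r) * PowerSeries.rescale x (PowerSeries.exp ℂ)) :
    ∀ (n : ℕ) (x : ℂ), E n x =
      ∑ k ∈ Finset.range (n / 2 + 1),
        (r : ℂ) ^ (n - 2 * k) * (n.choose (2 * k) : ℂ) * E (2 * k) 0 *
          (Ec (n - 2 * k)).eval (x / (r : ℂ)) := by
  intro n x
  set f : PowerSeries ℂ := PowerSeries.mk (fun m => E m 0 / (m.factorial : ℂ)) with hf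
  have hrne : (r : ℂ) ≠ 0 := Nat.cast_ne_zero.mpr (by omega)
  -- generating function at 0
  have h0 : (exp ℂ + 1) ^ r * f = PowerSeries.C (R := ℂ) ((2:ℂ)^r) := by
    have h := hE 0
    rw [rescale_zero] at h
    simpa using h
  have hneg : evalNegHom f = exp ℂ ^ r * f := neg_symm r f h0
  -- even-part coefficients
  have hco : ∀ m : ℕ, (PowerSeries.coeff (R := ℂ) m)
      (PowerSeries.C (R := ℂ) (2⁻¹) * (1 + exp ℂ ^ r) * f)
      = if Even m then E m 0 / (m.factorial : ℂ) else 0 := by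
    intro m
    have hrw : PowerSeries.C (R := ℂ) (2⁻¹) * (1 + exp ℂ ^ r) * f
        = PowerSeries.C (R := ℂ) (2⁻¹) * (f + evalNegHom f) := by
      rw [hneg]; ring
    rw [hrw, PowerSeries.coeff_C_mul, map_add]
    have : evalNegHom f = rescale (-1) f := rfl
    rw [this, coeff_rescale, hf, coeff_mk]
    rcases Nat.even_or_odd m with hm | hm
    · rw [if_pos hm, hm.neg_one_pow]; ring
    · rw [if_neg (Nat.not_even_iff_odd.mpr hm), hm.neg_one_pow]; ring
  -- main power series identity
  have hmain : PowerSeries.mk (fun m => E m x / (m.factorial : ℂ))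
      = (PowerSeries.C (R := ℂ) (2⁻¹) * (1 + exp ℂ ^ r) * f) * rescale (r:ℂ) (Ep (x / r)) := by
    apply mul_left_cancel₀ (exp_pow_ne r)
    rw [hE x]
    have hEg := congrArg (rescale (r:ℂ)) (Egen (x / r))
    rw [map_mul, map_mul, map_add, map_one, rescale_C', rescale_rescale,
      div_mul_cancel₀ x hrne] at hEg
    have hrexp : rescale ((r:ℕ):ℂ) (exp ℂ) = exp ℂ ^ r :=
      (exp_pow_eq_rescale_exp (A := ℂ) r).symm
    rw [hrexp] at hEg
    calc PowerSeries.C (R := ℂ) ((2:ℂ)^r) * rescale x (exp ℂ)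
        = (PowerSeries.C (R := ℂ) (2⁻¹) * PowerSeries.C (R := ℂ) ((2:ℂ)^r) * PowerSeries.C (R := ℂ) 2)
            * rescale x (exp ℂ) := by
          have hc : (2:ℂ)⁻¹ * 2 ^ r * 2 = 2 ^ r := by
            field_simp
          rw [← map_mul, ← map_mul, hc]
    _ = PowerSeries.C (R := ℂ) (2⁻¹) * PowerSeries.C (R := ℂ) ((2:ℂ)^r)
            * (PowerSeries.C (R := ℂ) 2 * rescale x (exp ℂ)) := by ring
    _ = PowerSeries.C (R := ℂ) (2⁻¹) * ((exp ℂ + 1) ^ r * f)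
            * ((exp ℂ ^ r + 1) * rescale (r:ℂ) (Ep (x / r))) := by rw [h0, hEg]
    _ = (exp ℂ + 1) ^ r * ((PowerSeries.C (R := ℂ) (2⁻¹) * (1 + exp ℂ ^ r) * f)
            * rescale (r:ℂ) (Ep (x / r))) := by ring
  -- extract coefficient n
  have hcoef := congrArg (PowerSeries.coeff (R := ℂ) n) hmain
  rw [coeff_mk, PowerSeries.coeff_mul, Finset.Nat.sum_antidiagonal_eq_sum_range_succ_mk]
    at hcoef
  simp only [hco, coeff_rescale, Ep, coeff_mk] at hcoef
  -- hcoef : E n x / n! = ∑ i ∈ range (n+1),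
  --   (if Even i then E i 0 / i! else 0) * (r^(n-i) * (Ec (n-i)).eval (x/r) / (n-i)!)
  have hnfac : ((n.factorial : ℂ)) ≠ 0 := Nat.cast_ne_zero.mpr (Nat.factorial_ne_zero n)
  have hEnx : E n x = ∑ i ∈ Finset.range (n + 1),
      (if Even i then E i 0 / (i.factorial : ℂ) else 0)
        * ((r:ℂ) ^ (n - i) * ((Ec (n - i)).eval (x / r) / ((n - i).factorial : ℂ)))
        * (n.factorial : ℂ) := by
    rw [← Finset.sum_mul, ← hcoef, div_mul_cancel₀ _ hnfac]
  rw [hEnx]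
  rw [show (∑ i ∈ Finset.range (n + 1),
      (if Even i then E i 0 / (i.factorial : ℂ) else 0)
        * ((r:ℂ) ^ (n - i) * ((Ec (n - i)).eval (x / r) / ((n - i).factorial : ℂ)))
        * (n.factorial : ℂ))
      = ∑ i ∈ (Finset.range (n + 1)).filter (fun i => Even i),
        E i 0 / (i.factorial : ℂ)
          * ((r:ℂ) ^ (n - i) * ((Ec (n - i)).eval (x / r) / ((n - i).factorial : ℂ)))
          * (n.factorial : ℂ) from ?_]
  · -- reindex filtered sum by k ↦ 2k
    apply Finset.sum_nbij' (fun i => i / 2) (fun k => 2 * k)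
    · intro a ha
      simp only [Finset.mem_filter, Finset.mem_range] at ha
      simp only [Finset.mem_range]
      omega
    · intro k hk
      simp only [Finset.mem_range] at hk
      simp only [Finset.mem_filter, Finset.mem_range]
      constructor
      · omega
      · exact even_two_mul k
    · intro a ha
      simp only [Finset.mem_filter, Finset.mem_range] at ha
      obtain ⟨c, hc⟩ := ha.2
      omega
    · intro k hk; omega
    · intro a ha
      simp only [Finset.mem_filter, Finset.mem_range] at ha
      obtain ⟨h1a, c, hc⟩ := ha
      have ha2 : 2 * (a / 2) = a := by omega
      rw [ha2]
      have hle : a ≤ n := by omega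
      have hch : ((n.choose a : ℂ)) * (a.factorial : ℂ) * ((n - a).factorial : ℂ)
          = (n.factorial : ℂ) := by
        rw [← Nat.cast_mul, ← Nat.cast_mul, Nat.choose_mul_factorial_mul_factorial hle]
      have hfa : ((a.factorial : ℂ)) ≠ 0 := Nat.cast_ne_zero.mpr (Nat.factorial_ne_zero a)
      have hfna : (((n - a).factorial : ℂ)) ≠ 0 :=
        Nat.cast_ne_zero.mpr (Nat.factorial_ne_zero (n - a))
      rw [← hch]
      field_simp
  · rw [Finset.sum_filter]
    apply Finset.sum_congr rfl
    intro i _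
    split
    · rfl
    · simp
end
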